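/- arXiv:1403.3069 — 7 statements merged into one kernel-verified Lean document; each statement's English description precedes it below -/
import Mathlib

section
/- Let f be a homogeneous polynomial of degree n in the variables X_1,…,X_d over ℂ and let U be a d×d unitary matrix. Then for every natural number k, both T_{f∘U} and T_f map the (finite-dimensional) space H_k of homogeneous polynomials of degree k in X_1,…,X_d into itself, and the characteristic polynomial of the restriction of T_{f∘U} to H_k equals the characteristic polynomial of the restriction of T_f to H_k. (This is the invariance of the spectrum of f f† under linear optics, Theorem 1 of the paper, in the Bargmann representation.) -/
open MvPolynomial

/-- The differential operator `∂^α = ∏ i, (∂/∂Xᵢ)^(α i)` acting on polynomials. -/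
noncomputable def partialPow {d : ℕ} (α : Fin d →₀ ℕ) :
    Module.End ℂ (MvPolynomial (Fin d) ℂ) :=
  (List.ofFn fun i : Fin d =>
    ((pderiv i).toLinearMap ^ (α i) : Module.End ℂ (MvPolynomial (Fin d) ℂ))).prod

/-- The annihilation operator `f̄(∂) : g ↦ Σ_α conj(c_α) ∂^α g`. -/
noncomputable def annOp {d : ℕ} (f : MvPolynomial (Fin d) ℂ) :
    Module.End ℂ (MvPolynomial (Fin d) ℂ) :=
  ∑ α ∈ f.support, (starRingEnd ℂ) (coeff α f) • partialPow α

/-- `T_f : g ↦ f̄(∂)(f·g)`, the Bargmann representation of `f(a) f(a)†`. -/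
noncomputable def Tf {d : ℕ} (f : MvPolynomial (Fin d) ℂ) :
    Module.End ℂ (MvPolynomial (Fin d) ℂ) :=
  annOp f ∘ₗ LinearMap.mulLeft ℂ f

/-- The substitution `Xᵢ ↦ Σⱼ U i j • Xⱼ`, i.e. `f ∘ U`. -/
noncomputable def compU {d : ℕ} (U : Matrix (Fin d) (Fin d) ℂ) (f : MvPolynomial (Fin d) ℂ) :
    MvPolynomial (Fin d) ℂ :=
  aeval (fun i => ∑ j, U i j • (X j : MvPolynomial (Fin d) ℂ)) f

/-- The space of homogeneous polynomials of a fixed degree is finite dimensional. -/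
instance (d k : ℕ) : Module.Finite ℂ ↥(homogeneousSubmodule (Fin d) ℂ k) := by
  classical
  have hfin : {m : Fin d →₀ ℕ | m.degree = k}.Finite :=
    (Finsupp.finite_of_degree_le k).subset fun m hm => le_of_eq hm
  haveI : Finite ({m : Fin d →₀ ℕ | m.degree = k} : Set _) := hfin
  exact Module.Finite.equiv
    (((AddMonoidAlgebra.supportedEquivFinsupp _).symm).trans
      (LinearEquiv.ofEq _ _ (homogeneousSubmodule_eq_finsupp_supported (Fin d) ℂ k).symm))

/-!
Write `C_U g = g ∘ U`. This is an algebra automorphism of `ℂ[X]` preserving degrees, and the chain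
rule `∂ⱼ ∘ C_U = Σᵢ U i j • C_U ∘ ∂ᵢ` combined with `U Uᴴ = 1` gives
`C_U ∘ ∂ᵢ ∘ C_U⁻¹ = Σⱼ conj (U i j) • ∂ⱼ`. As `p ↦ p(∂)` is an algebra homomorphism, it follows
that `f̄(∂)` and multiplication by `f` are both conjugated by `C_U` into their counterparts for
`f ∘ U`, so `T_{f∘U} = C_U T_f C_U⁻¹`. Since `f̄(∂)` lowers degrees by `n`, both operators
preserve `H_k`, on which `C_U` restricts to an automorphism; the restrictions are conjugate.
-/

open scoped IsMulCommutative Matrix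

section DiffOp

variable {σ R : Type*} [CommRing R]

theorem pderiv_pderiv_comm (i j : σ) (p : MvPolynomial σ R) :
    pderiv i (pderiv j p) = pderiv j (pderiv i p) := by
  have : ⁅(pderiv i : Derivation R (MvPolynomial σ R) (MvPolynomial σ R)), pderiv j⁆ =
      (0 : Derivation R (MvPolynomial σ R) (MvPolynomial σ R)) := by
    refine derivation_ext fun k => ?_
    classical
    simp [Derivation.commutator_apply, pderiv_X, Pi.single_apply, apply_ite]
  simpa [sub_eq_zero, Derivation.commutator_apply] using congr($this p)

variable (σ R) in
noncomputable def pderivAlgebra : Subalgebra R (Module.End R (MvPolynomial σ R)) :=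
  Algebra.adjoin R (Set.range fun i => (pderiv i).toLinearMap)

instance : IsMulCommutative (pderivAlgebra σ R) :=
  Algebra.isMulCommutative_adjoin R <| by
    rintro _ ⟨i, rfl⟩ _ ⟨j, rfl⟩
    exact LinearMap.ext (pderiv_pderiv_comm i j)

/-- `p ↦ p(∂)`. Since the `∂ᵢ` commute, this is `aeval` into the commutative subalgebra they
generate. -/
noncomputable def diffOp : MvPolynomial σ R →ₐ[R] Module.End R (MvPolynomial σ R) :=
  (pderivAlgebra σ R).val.comp
    (aeval fun i => ⟨(pderiv i).toLinearMap, Algebra.subset_adjoin ⟨i, rfl⟩⟩)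

@[simp]
theorem diffOp_X (i : σ) : diffOp (X i : MvPolynomial σ R) = (pderiv i).toLinearMap := by
  simp [diffOp]

end DiffOp

theorem partialPow_eq_diffOp {d : ℕ} (α : Fin d →₀ ℕ) :
    partialPow α = diffOp (monomial α (1 : ℂ)) := by
  rw [diffOp, AlgHom.comp_apply, aeval_monomial, map_one, one_mul,
    Finsupp.prod_fintype _ _ fun _ => pow_zero _, ← List.prod_ofFn, map_list_prod,
    List.map_ofFn]
  rfl

theorem annOp_eq_diffOp {d : ℕ} (f : MvPolynomial (Fin d) ℂ) :
    annOp f = diffOp (map (starRingEnd ℂ) f) := by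
  conv_rhs => rw [as_sum (map (starRingEnd ℂ) f), support_map_of_injective _ (RingHom.injective _)]
  simp only [annOp, map_sum, partialPow_eq_diffOp, coeff_map]
  refine Finset.sum_congr rfl fun α _ => ?_
  rw [← map_smul, smul_monomial, smul_eq_mul, mul_one]

section Homogeneous

variable {σ R : Type*} [CommRing R]

theorem MvPolynomial.IsHomogeneous.pderiv_pow_apply {g : MvPolynomial σ R} {m : ℕ}
    (hg : g.IsHomogeneous m) (i : σ) (k : ℕ) :
    (((pderiv i).toLinearMap ^ k : Module.End R _) g).IsHomogeneous (m - k) := by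
  induction k with
  | zero => rwa [pow_zero]
  | succ k ih =>
    rw [pow_succ', Module.End.mul_apply, ← Nat.sub_sub]
    exact ih.pderiv

theorem MvPolynomial.IsHomogeneous.diffOp_monomial_apply {g : MvPolynomial σ R} {m : ℕ}
    (hg : g.IsHomogeneous m) (α : σ →₀ ℕ) :
    (diffOp (monomial α (1 : R)) g).IsHomogeneous (m - α.degree) := by
  induction α using Finsupp.induction_linear generalizing g m with
  | zero => simpa using hg
  | add α β hα hβ =>
    rw [← one_mul (1 : R), ← monomial_mul, map_mul, Module.End.mul_apply, map_add,
      add_comm, ← Nat.sub_sub]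
    exact hα (hβ hg)
  | single i k =>
    rw [← X_pow_eq_monomial, map_pow, diffOp_X, Finsupp.degree_single]
    exact hg.pderiv_pow_apply i k

theorem MvPolynomial.IsHomogeneous.diffOp_apply {p g : MvPolynomial σ R} {n m : ℕ}
    (hp : p.IsHomogeneous n) (hg : g.IsHomogeneous m) :
    (diffOp p g).IsHomogeneous (m - n) := by
  rw [p.as_sum, map_sum, LinearMap.sum_apply]
  refine IsHomogeneous.sum _ _ _ fun α hα => ?_
  have hdeg : α.degree = n := by
    rw [Finsupp.degree_eq_weight_one]
    exact hp (mem_support_iff.mp hα)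
  rw [← mul_one (coeff α p), ← smul_eq_mul, ← smul_monomial, map_smul, LinearMap.smul_apply,
    smul_eq_C_mul, ← hdeg]
  exact (hg.diffOp_monomial_apply α).C_mul _

end Homogeneous

theorem Tf_mem_homogeneousSubmodule {d n : ℕ} {f : MvPolynomial (Fin d) ℂ}
    (hf : f.IsHomogeneous n) (k : ℕ) :
    ∀ g ∈ homogeneousSubmodule (Fin d) ℂ k, Tf f g ∈ homogeneousSubmodule (Fin d) ℂ k := by
  intro g hg
  rw [mem_homogeneousSubmodule] at hg ⊢
  have := (hf.map (starRingEnd ℂ)).diffOp_apply (hf.mul hg)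
  rwa [Nat.add_sub_cancel_left, ← annOp_eq_diffOp] at this

section LinSubst

variable {σ R : Type*} [Fintype σ] [CommSemiring R]

noncomputable def linSubst (A : Matrix σ σ R) : MvPolynomial σ R →ₐ[R] MvPolynomial σ R :=
  aeval fun i => ∑ j, A i j • X j

theorem linSubst_X (A : Matrix σ σ R) (i : σ) : linSubst A (X i) = ∑ j, A i j • X j :=
  aeval_X _ _

theorem linSubst_comp (A B : Matrix σ σ R) :
    (linSubst A).comp (linSubst B) = linSubst (B * A) := by
  refine algHom_ext fun i => ?_
  simp only [AlgHom.comp_apply, linSubst_X, map_sum, map_smul, Finset.smul_sum, smul_smul,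
    Matrix.mul_apply, Finset.sum_smul]
  exact Finset.sum_comm

theorem linSubst_one [DecidableEq σ] : linSubst (1 : Matrix σ σ R) = AlgHom.id R _ := by
  refine algHom_ext fun i => ?_
  simp [linSubst_X, Matrix.one_apply, ite_smul]

noncomputable def linSubstEquiv [DecidableEq σ] (A : (Matrix σ σ R)ˣ) :
    MvPolynomial σ R ≃ₐ[R] MvPolynomial σ R :=
  AlgEquiv.ofAlgHom (linSubst A) (linSubst ↑A⁻¹)
    (by rw [linSubst_comp, Units.inv_mul, linSubst_one])
    (by rw [linSubst_comp, Units.mul_inv, linSubst_one])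

@[simp]
theorem linSubstEquiv_apply [DecidableEq σ] (A : (Matrix σ σ R)ˣ) (p : MvPolynomial σ R) :
    linSubstEquiv A p = linSubst A p :=
  rfl

theorem MvPolynomial.IsHomogeneous.linSubst {p : MvPolynomial σ R} {n : ℕ}
    (hp : p.IsHomogeneous n) (A : Matrix σ σ R) : (linSubst A p).IsHomogeneous n := by
  have hX (i : σ) : (∑ j, A i j • X j : MvPolynomial σ R).IsHomogeneous 1 :=
    IsHomogeneous.sum _ _ _ fun j _ => by
      simpa only [smul_eq_C_mul] using isHomogeneous_C_mul_X (A i j) j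
  rw [← one_mul n]
  exact hp.aeval _ hX

theorem map_linSubstEquiv_homogeneousSubmodule [DecidableEq σ] (A : (Matrix σ σ R)ˣ) (n : ℕ) :
    (homogeneousSubmodule σ R n).map (linSubstEquiv A).toLinearEquiv.toLinearMap =
      homogeneousSubmodule σ R n := by
  refine le_antisymm (Submodule.map_le_iff_le_comap.mpr fun p hp => hp.linSubst A)
    fun p hp => ⟨linSubst ↑A⁻¹ p, hp.linSubst _, ?_⟩
  change linSubstEquiv A ((linSubstEquiv A).symm p) = p
  exact AlgEquiv.apply_symm_apply _ _

theorem map_linSubst {S : Type*} [CommSemiring S] (φ : R →+* S) (A : Matrix σ σ R)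
    (p : MvPolynomial σ R) : map φ (linSubst A p) = linSubst (A.map φ) (map φ p) := by
  suffices (map φ).comp (linSubst A).toRingHom = (linSubst (A.map φ)).toRingHom.comp (map φ) from
    congr($this p)
  exact ringHom_ext (fun r => by simp) fun i => by simp [linSubst_X, smul_eq_C_mul]

theorem pderiv_linSubst (A : Matrix σ σ R) (j : σ) (g : MvPolynomial σ R) :
    pderiv j (linSubst A g) = ∑ i, A i j • linSubst A (pderiv i g) := by
  classical
  induction g using MvPolynomial.induction_on with
  | C c => simp
  | add p q hp hq => simp [hp, hq, Finset.sum_add_distrib]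
  | mul_X p m ih =>
    have hX : pderiv j (linSubst A (X m)) = ∑ i, A i j • linSubst A (pderiv i (X m)) := by
      simp [linSubst_X, pderiv_X, Pi.single_apply, apply_ite (linSubst A)]
    simp only [map_mul, pderiv_mul, ih, hX, map_add, smul_add, Finset.sum_add_distrib,
      Finset.sum_mul, Finset.mul_sum, smul_mul_assoc, mul_smul_comm]

end LinSubst

section Intertwine

variable {σ R : Type*} [Fintype σ] [DecidableEq σ] [CommRing R]

theorem sum_smul_pderiv_linSubst {A B : Matrix σ σ R} (hAB : A * B = 1) (i : σ)
    (g : MvPolynomial σ R) :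
    ∑ j, B j i • pderiv j (linSubst A g) = linSubst A (pderiv i g) := by
  simp_rw [pderiv_linSubst, Finset.smul_sum, smul_smul]
  rw [Finset.sum_comm]
  simp_rw [← Finset.sum_smul, mul_comm (B _ i), ← Matrix.mul_apply, hAB, Matrix.one_apply,
    ite_smul, one_smul, zero_smul, Finset.sum_ite_eq', Finset.mem_univ, if_true]

theorem diffOp_linSubst_inv_transpose (A : (Matrix σ σ R)ˣ) (p : MvPolynomial σ R) :
    diffOp (linSubst (↑A⁻¹ : Matrix σ σ R)ᵀ p) =
      (linSubstEquiv A).toLinearEquiv.conjAlgEquiv R (diffOp p) := by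
  suffices diffOp.comp (linSubst (↑A⁻¹ : Matrix σ σ R)ᵀ) =
      ((linSubstEquiv A).toLinearEquiv.conjAlgEquiv R).toAlgHom.comp diffOp from congr($this p)
  refine algHom_ext fun i => LinearMap.ext fun g => ?_
  obtain ⟨h, rfl⟩ := (linSubstEquiv A).surjective g
  simp only [AlgHom.comp_apply, linSubst_X, map_sum, map_smul, diffOp_X, Matrix.transpose_apply,
    LinearMap.coe_sum, LinearMap.coe_smul, Derivation.coeFn_coe, Finset.sum_apply, Pi.smul_apply,
    AlgEquiv.coe_toAlgHom, LinearEquiv.conjAlgEquiv_apply, LinearMap.coe_comp,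
    LinearEquiv.coe_coe, AlgEquiv.coe_toLinearEquiv,
    AlgEquiv.coe_symm_toLinearEquiv, Function.comp_apply, AlgEquiv.symm_apply_apply]
  exact sum_smul_pderiv_linSubst A.mul_inv i h

end Intertwine

theorem LinearMap.charpoly_restrict_eq_of_eq_conj {K M : Type*} [CommRing K] [AddCommGroup M]
    [Module K M] (e : M ≃ₗ[K] M) {p : Submodule K M} [Module.Free K p] [Module.Finite K p]
    (he : p.map e.toLinearMap = p) {T T' : Module.End K M} (hTT' : T' = e.conj T)
    (hT : ∀ x ∈ p, T x ∈ p) (hT' : ∀ x ∈ p, T' x ∈ p) :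
    (T'.restrict hT').charpoly = (T.restrict hT).charpoly := by
  subst hTT'
  have : (e.conj T).restrict hT' = (e.ofSubmodules p p he).conj (T.restrict hT) := by
    ext x
    simp [LinearEquiv.conj_apply]
  rw [this, LinearEquiv.charpoly_conj]

section Unitary

variable {d : ℕ} {U : Matrix (Fin d) (Fin d) ℂ}

theorem annOp_compU (hU : U ∈ Matrix.unitaryGroup (Fin d) ℂ) (f : MvPolynomial (Fin d) ℂ) :
    annOp (compU U f) =
      (linSubstEquiv (Unitary.toUnits ⟨U, hU⟩)).toLinearEquiv.conjAlgEquiv ℂ (annOp f) := by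
  -- For unitary `U`, the transpose of `U⁻¹ = Uᴴ` is `U.map conj` by definition.
  rw [annOp_eq_diffOp, annOp_eq_diffOp, ← diffOp_linSubst_inv_transpose]
  exact congrArg diffOp (map_linSubst _ U f)

theorem Tf_compU (hU : U ∈ Matrix.unitaryGroup (Fin d) ℂ) (f : MvPolynomial (Fin d) ℂ) :
    Tf (compU U f) = (linSubstEquiv (Unitary.toUnits ⟨U, hU⟩)).toLinearEquiv.conj (Tf f) := by
  set e := (linSubstEquiv (Unitary.toUnits ⟨U, hU⟩)).toLinearEquiv
  have hmul : LinearMap.mulLeft ℂ (compU U f) = e.conjAlgEquiv ℂ (LinearMap.mulLeft ℂ f) := by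
    refine LinearMap.ext fun g => ?_
    change compU U f * g = linSubstEquiv _ (f * (linSubstEquiv _).symm g)
    rw [map_mul, AlgEquiv.apply_symm_apply]
    rfl
  change annOp _ * LinearMap.mulLeft ℂ _ = e.conjAlgEquiv ℂ (annOp f * LinearMap.mulLeft ℂ f)
  rw [map_mul, annOp_compU hU, hmul]

end Unitary

/-- For `f` homogeneous of degree `n` and `U` unitary, both `T_{f∘U}` and
`T_f` preserve the space `H_k` of homogeneous polynomials of degree `k`, and the
characteristic polynomials of their restrictions to `H_k` coincide. -/
theorem charpoly_Tf_compU_eq (d n : ℕ) (f : MvPolynomial (Fin d) ℂ) (hf : f.IsHomogeneous n)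
    (U : Matrix (Fin d) (Fin d) ℂ) (hU : U ∈ Matrix.unitaryGroup (Fin d) ℂ) (k : ℕ) :
    ∃ (h₁ : ∀ g ∈ homogeneousSubmodule (Fin d) ℂ k,
        Tf (compU U f) g ∈ homogeneousSubmodule (Fin d) ℂ k)
      (h₂ : ∀ g ∈ homogeneousSubmodule (Fin d) ℂ k,
        Tf f g ∈ homogeneousSubmodule (Fin d) ℂ k),
      ((Tf (compU U f)).restrict h₁).charpoly = ((Tf f).restrict h₂).charpoly :=
  ⟨Tf_mem_homogeneousSubmodule (hf.linSubst U) k, Tf_mem_homogeneousSubmodule hf k,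
    LinearMap.charpoly_restrict_eq_of_eq_conj _
      (map_linSubstEquiv_homogeneousSubmodule _ k) (Tf_compU hU f) _ _⟩
end

section
/- Let f be a homogeneous polynomial of degree n ≥ 1 in the variables X_1,…,X_d over ℂ. Then for every natural number k ≥ 1, the Fischer norm squared of f^k satisfies ‖f^k‖² ≤ ((kn)! / (n!)^k) · (‖f‖²)^k. In particular, if ‖f‖² = 1 then ‖f^k‖² ≤ (kn)!/(n!)^k. (This is the quantitative content of Theorem 2: ⟨Ω| f^k f†^k |Ω⟩ equals (kn)!/(n!)^k times the squared norm of the projection of the k-fold tensor power of the corresponding n-photon state onto the symmetric subspace, and a projection does not increase norm.) -/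
open MvPolynomial

/-- The Fischer (Bombieri–Fock) squared norm of a polynomial:
`‖f‖² = Σ_α |c_α(f)|² · α!` where `α! = ∏ i (α i)!`. -/
noncomputable def fischerNormSq {d : ℕ} (f : MvPolynomial (Fin d) ℂ) : ℝ :=
  ∑ α ∈ f.support, Complex.normSq (coeff α f) * (α.prod fun _ m => (m.factorial : ℝ))

/-! By induction on `k`, it suffices that `‖f g‖² ≤ (a + b).choose a * ‖f‖² * ‖g‖²` for `f`
and `g` homogeneous of degrees `a` and `b`. In the coefficient `(f g)_γ = Σ_{α + β = γ} f_α g_β`,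
apply Cauchy–Schwarz with the weights `∏ i, (γ i).choose (α i) = γ! / (α! β!)`: since `|α| = a`
and `|β| = b`, the multivariate Vandermonde identity bounds their sum by `(a + b).choose a`, and
the other factor, multiplied by `γ!`, is `Σ_{α + β = γ} |f_α|² α! |g_β|² β!`. Summing over `γ`
gives `‖f‖² ‖g‖²`. -/

open Finset Nat
open scoped Pointwise

theorem sum_finsuppAntidiag_prod_choose {σ : Type*} [Fintype σ] [DecidableEq σ]
    (γ : σ → ℕ) (a : ℕ) :
    ∑ l ∈ finsuppAntidiag univ a, ∏ i, (γ i).choose (l i) = (∑ i, γ i).choose a := by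
  have coeff_one_add_X_pow (m k : ℕ) :
      PowerSeries.coeff k ((1 + PowerSeries.X : PowerSeries ℕ) ^ m) = m.choose k := by
    have := Polynomial.coeff_coe ((1 + Polynomial.X : Polynomial ℕ) ^ m) k
    rwa [Polynomial.coe_pow, Polynomial.coe_add, Polynomial.coe_one, Polynomial.coe_X,
      Polynomial.coeff_one_add_X_pow, Nat.cast_id] at this
  rw [← coeff_one_add_X_pow, ← prod_pow_eq_pow_sum, PowerSeries.coeff_prod]
  simp only [coeff_one_add_X_pow]

theorem sum_prod_choose_le_add_choose {σ : Type*} [Fintype σ] {γ : σ →₀ ℕ} {a b : ℕ}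
    (t : Finset ((σ →₀ ℕ) × (σ →₀ ℕ)))
    (ht : ∀ p ∈ t, p.1 + p.2 = γ ∧ p.1.degree = a ∧ p.2.degree = b) :
    ∑ p ∈ t, ∏ i, (γ i).choose (p.1 i) ≤ (a + b).choose a := by
  classical
  rcases t.eq_empty_or_nonempty with rfl | ⟨p₀, hp₀⟩
  · simp
  have hγ : γ.degree = a + b := by
    obtain ⟨rfl, ha, hb⟩ := ht p₀ hp₀
    rw [map_add, ha, hb]
  have hinj : Set.InjOn Prod.fst t := fun p hp q hq hpq =>
    Prod.ext hpq (add_left_cancel (((ht p hp).1.trans (ht q hq).1.symm).trans (by rw [hpq])))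
  rw [← hγ, Finsupp.degree_eq_sum, ← sum_finsuppAntidiag_prod_choose,
    ← sum_image (f := fun l : σ →₀ ℕ => ∏ i, (γ i).choose (l i)) hinj]
  refine sum_le_sum_of_subset fun l hl => ?_
  obtain ⟨p, hp, rfl⟩ := mem_image.mp hl
  simp [mem_finsuppAntidiag, ← Finsupp.degree_eq_sum, (ht p hp).2.1]

def Finsupp.factorial {σ : Type*} [Fintype σ] (α : σ →₀ ℕ) : ℕ := ∏ i, (α i)!

theorem Finsupp.factorial_add {σ : Type*} [Fintype σ] (α β : σ →₀ ℕ) :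
    (α + β).factorial = (∏ i, ((α + β) i).choose (α i)) * α.factorial * β.factorial := by
  simp only [Finsupp.factorial, ← prod_mul_distrib, Finsupp.add_apply]
  refine Finset.prod_congr rfl fun i _ => ?_
  rw [← Nat.add_choose_mul_factorial_mul_factorial, ← Nat.choose_symm_add]

theorem Complex.normSq_sum_le_mul_sum_div {ι : Type*} (s : Finset ι) (z : ι → ℂ)
    {w : ι → ℝ} (hw : ∀ i ∈ s, 0 < w i) :
    normSq (∑ i ∈ s, z i) ≤ (∑ i ∈ s, w i) * ∑ i ∈ s, normSq (z i) / w i := by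
  rcases s.eq_empty_or_nonempty with rfl | hs
  · simp
  calc normSq (∑ i ∈ s, z i) = ‖∑ i ∈ s, z i‖ ^ 2 := (Complex.sq_norm _).symm
    _ ≤ (∑ i ∈ s, ‖z i‖) ^ 2 := pow_le_pow_left₀ (norm_nonneg _) (norm_sum_le _ _) 2
    _ ≤ (∑ i ∈ s, w i) * ∑ i ∈ s, ‖z i‖ ^ 2 / w i := by
      rw [← div_le_iff₀' (sum_pos hw hs)]
      exact sq_sum_div_le_sum_sq_div s _ hw
    _ = (∑ i ∈ s, w i) * ∑ i ∈ s, normSq (z i) / w i := by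
      simp only [Complex.sq_norm]

theorem MvPolynomial.coeff_mul_eq_sum_filter {σ R : Type*} [CommSemiring R] [DecidableEq σ]
    (p q : MvPolynomial σ R) (γ : σ →₀ ℕ) :
    coeff γ (p * q) =
      ∑ x ∈ p.support ×ˢ q.support with x.1 + x.2 = γ, coeff x.1 p * coeff x.2 q := by
  rw [coeff_mul]
  refine (sum_subset (fun x hx => ?_) fun x hx hxs => ?_).symm
  · exact HasAntidiagonal.mem_antidiagonal.mpr (mem_filter.mp hx).2
  by_contra hne
  exact hxs (by simp_all [left_ne_zero_of_mul hne, right_ne_zero_of_mul hne])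

theorem fischerNormSq_eq_sum_of_support_subset {d : ℕ} {f : MvPolynomial (Fin d) ℂ}
    {s : Finset (Fin d →₀ ℕ)} (hs : f.support ⊆ s) :
    fischerNormSq f = ∑ α ∈ s, Complex.normSq (coeff α f) * α.factorial := by
  rw [fischerNormSq, ← sum_subset hs fun α _ hα => by simp [notMem_support_iff.mp hα]]
  refine sum_congr rfl fun α _ => ?_
  rw [Finsupp.prod_fintype _ _ fun _ => by simp, Finsupp.factorial, Nat.cast_prod]

theorem fischerNormSq_nonneg {d : ℕ} (f : MvPolynomial (Fin d) ℂ) : 0 ≤ fischerNormSq f := by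
  rw [fischerNormSq_eq_sum_of_support_subset subset_rfl]
  exact sum_nonneg fun α _ => mul_nonneg (Complex.normSq_nonneg _) (Nat.cast_nonneg _)

theorem fischerNormSq_one {d : ℕ} : fischerNormSq (1 : MvPolynomial (Fin d) ℂ) = 1 := by
  rw [fischerNormSq_eq_sum_of_support_subset support_one.subset]
  simp [Finsupp.factorial]

theorem normSq_coeff_mul_mul_factorial_le {d a b : ℕ} {f g : MvPolynomial (Fin d) ℂ}
    (hf : f.IsHomogeneous a) (hg : g.IsHomogeneous b) (γ : Fin d →₀ ℕ) :
    Complex.normSq (coeff γ (f * g)) * γ.factorial ≤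
      (a + b).choose a * ∑ p ∈ f.support ×ˢ g.support with p.1 + p.2 = γ,
        Complex.normSq (coeff p.1 f) * p.1.factorial *
          (Complex.normSq (coeff p.2 g) * p.2.factorial) := by
  classical
  set t := {p ∈ f.support ×ˢ g.support | p.1 + p.2 = γ}
  have hmem : ∀ p ∈ t, p.1 + p.2 = γ ∧ p.1.degree = a ∧ p.2.degree = b := fun p hp => by
    simp only [t, mem_filter, mem_product] at hp
    exact ⟨hp.2, (hf.degree_eq_sum_deg_support hp.1.1).symm,
      (hg.degree_eq_sum_deg_support hp.1.2).symm⟩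
  set M : (Fin d →₀ ℕ) × (Fin d →₀ ℕ) → ℝ :=
    fun p => ∏ i, ((γ i).choose (p.1 i) : ℝ)
  have hMpos : ∀ p ∈ t, 0 < M p := fun p hp => prod_pos fun i _ =>
    Nat.cast_pos.mpr (Nat.choose_pos ((hmem p hp).1 ▸ le_self_add))
  have hMsum : ∑ p ∈ t, M p ≤ (a + b).choose a := by
    simp only [M, ← Nat.cast_prod, ← Nat.cast_sum]
    exact_mod_cast sum_prod_choose_le_add_choose t hmem
  have hfactorial : ∀ p ∈ t, (γ.factorial : ℝ) = M p * p.1.factorial * p.2.factorial :=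
    fun p hp => by
      simp only [M, ← (hmem p hp).1]
      exact_mod_cast Finsupp.factorial_add p.1 p.2
  calc Complex.normSq (coeff γ (f * g)) * γ.factorial
      ≤ (∑ p ∈ t, M p) * (∑ p ∈ t, Complex.normSq (coeff p.1 f * coeff p.2 g) / M p) *
          γ.factorial := by
        rw [coeff_mul_eq_sum_filter]
        gcongr
        exact Complex.normSq_sum_le_mul_sum_div t _ hMpos
    _ = (∑ p ∈ t, M p) * ∑ p ∈ t, Complex.normSq (coeff p.1 f) * p.1.factorial *
          (Complex.normSq (coeff p.2 g) * p.2.factorial) := by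
        rw [mul_assoc]
        congr 1
        rw [sum_mul]
        refine sum_congr rfl fun p hp => ?_
        rw [hfactorial p hp, Complex.normSq_mul]
        field_simp [(hMpos p hp).ne']
    _ ≤ _ := by
        gcongr
        exact sum_nonneg fun p _ => mul_nonneg
          (mul_nonneg (Complex.normSq_nonneg _) (Nat.cast_nonneg _))
          (mul_nonneg (Complex.normSq_nonneg _) (Nat.cast_nonneg _))

theorem fischerNormSq_mul_le {d a b : ℕ} {f g : MvPolynomial (Fin d) ℂ}
    (hf : f.IsHomogeneous a) (hg : g.IsHomogeneous b) :
    fischerNormSq (f * g) ≤ (a + b).choose a * (fischerNormSq f * fischerNormSq g) := by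
  classical
  have hfibres : ∀ p ∈ f.support ×ˢ g.support, p.1 + p.2 ∈ f.support + g.support :=
    fun p hp => add_mem_add (mem_product.mp hp).1 (mem_product.mp hp).2
  rw [fischerNormSq_eq_sum_of_support_subset (support_mul f g),
    fischerNormSq_eq_sum_of_support_subset subset_rfl,
    fischerNormSq_eq_sum_of_support_subset subset_rfl, sum_mul_sum, ← sum_product',
    ← sum_fiberwise_of_maps_to hfibres, mul_sum]
  exact sum_le_sum fun γ _ => normSq_coeff_mul_mul_factorial_le hf hg γ

theorem fischerNormSq_pow_mul_factorial_pow_le {d n : ℕ} {f : MvPolynomial (Fin d) ℂ}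
    (hf : f.IsHomogeneous n) (k : ℕ) :
    fischerNormSq (f ^ k) * (n ! : ℝ) ^ k ≤ (k * n)! * fischerNormSq f ^ k := by
  induction k with
  | zero => simp [fischerNormSq_one]
  | succ k ih =>
    have hchoose : ((k * n + n).choose (k * n) * (k * n)! * n ! : ℝ) = ((k + 1) * n)! := by
      rw [add_one_mul, ← Nat.add_choose_mul_factorial_mul_factorial, ← Nat.choose_symm_add]
      push_cast
      ring
    calc fischerNormSq (f ^ (k + 1)) * (n ! : ℝ) ^ (k + 1)
        ≤ (k * n + n).choose (k * n) * (fischerNormSq (f ^ k) * fischerNormSq f) *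
            ((n ! : ℝ) ^ k * n !) := by
          rw [pow_succ, pow_succ]
          gcongr
          exact fischerNormSq_mul_le (by simpa [mul_comm] using hf.pow k) hf
      _ = (k * n + n).choose (k * n) * n ! * fischerNormSq f *
            (fischerNormSq (f ^ k) * (n ! : ℝ) ^ k) := by ring
      _ ≤ (k * n + n).choose (k * n) * n ! * fischerNormSq f *
            ((k * n)! * fischerNormSq f ^ k) := by
          gcongr
          exact mul_nonneg (by positivity) (fischerNormSq_nonneg f)
      _ = ((k + 1) * n)! * fischerNormSq f ^ (k + 1) := by
          rw [← hchoose]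
          ring

theorem fischerNormSq_pow_le_general (d n : ℕ) (f : MvPolynomial (Fin d) ℂ)
    (hf : f.IsHomogeneous n) (k : ℕ) :
    fischerNormSq (f ^ k) ≤
      (((k * n).factorial : ℝ) / ((n.factorial : ℝ)) ^ k) * (fischerNormSq f) ^ k := by
  rw [div_mul_eq_mul_div, le_div_iff₀ (by positivity)]
  exact fischerNormSq_pow_mul_factorial_pow_le hf k

/-- For `f` homogeneous of degree `n ≥ 1` and any `k ≥ 1`,
`‖f^k‖² ≤ ((kn)!/(n!)^k) · (‖f‖²)^k`. -/
theorem fischerNormSq_pow_le (d n : ℕ) (hn : 1 ≤ n) (f : MvPolynomial (Fin d) ℂ)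
    (hf : f.IsHomogeneous n) (k : ℕ) (hk : 1 ≤ k) :
    fischerNormSq (f ^ k) ≤
      (((k * n).factorial : ℝ) / ((n.factorial : ℝ)) ^ k) * (fischerNormSq f) ^ k :=
  fischerNormSq_pow_le_general d n f hf k
end

section
/- Let U be a d×d unitary matrix, let α, β : Fin d → ℕ be multi-indices, and let c ∈ ℂ. If the polynomial identity ∏_{i=1}^{d} (Σ_{j=1}^{d} U_{ij} X_j)^{α_i} = c · ∏_{i=1}^{d} X_i^{β_i} holds in ℂ[X_1,…,X_d], then c ≠ 0 and there exists a permutation σ of Fin d such that β_i = α_{σ(i)} for all i. (Two Fock states can be related deterministically by linear optics only if they have the same photon counts up to a permutation of the modes.) -/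
/-!
On the torus `(ℂˣ)ᵈ` the right-hand side never vanishes, so no linear form `∑ⱼ U i j X j` with
`α i ≠ 0` may vanish there; over an infinite field this forces the form to have a single nonzero
coefficient, at some `g i`. The left-hand side is then the monomial `∏ᵢ X (g i) ^ α i` times a
constant. Orthogonality of the rows of `U` makes `g` injective on the occupied modes, so comparing
exponents shows that `β` is `α` transported along any permutation extending `g`.
-/

open MvPolynomial

section Combinatorics

variable {ι : Type*} [Fintype ι]

theorem Set.InjOn.exists_perm_eqOn {s : Set ι} {g : ι → ι} (hg : s.InjOn g) :
    ∃ τ : Equiv.Perm ι, s.EqOn τ g := by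
  classical
  obtain ⟨τ, hτ⟩ := Set.MapsTo.exists_equiv_extend_of_card_eq (t := Finset.univ)
    Finset.card_univ.symm (fun _ _ => Finset.mem_coe.2 (Finset.mem_univ _)) hg
  exact ⟨τ.trans (Equiv.subtypeUnivEquiv Finset.mem_univ), fun i hi => hτ i hi⟩

theorem exists_perm_of_sum_single_eq {g : ι → ι} {α β : ι → ℕ}
    (hg : {i | α i ≠ 0}.InjOn g)
    (h : ∑ i, Finsupp.single (g i) (α i) = ∑ i, Finsupp.single i (β i)) :
    ∃ σ : Equiv.Perm ι, ∀ i, β i = α (σ i) := by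
  obtain ⟨τ, hτ⟩ := hg.exists_perm_eqOn
  refine ⟨τ.symm, congrFun ?_⟩
  have hgτ : ∑ i, Finsupp.single (g i) (α i) = ∑ i, Finsupp.single (τ i) (α i) := by
    refine Finset.sum_congr rfl fun i _ => ?_
    rcases eq_or_ne (α i) 0 with hi | hi
    · simp [hi]
    · rw [hτ hi]
  rw [hgτ, ← Equiv.sum_comp τ.symm] at h
  simp only [Equiv.apply_symm_apply] at h
  simpa only [Finsupp.coe_univ_sum_single] using (congrArg DFunLike.coe h).symm

end Combinatorics

section LinearForms

variable {m ι K : Type*} [Fintype ι] [Field K]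

theorem exists_forall_ne_zero_and_sum_mul_eq_zero [Infinite K] {a : ι → K}
    {j₁ j₂ : ι} (hne : j₁ ≠ j₂) (h₁ : a j₁ ≠ 0) (h₂ : a j₂ ≠ 0) :
    ∃ x : ι → K, (∀ j, x j ≠ 0) ∧ ∑ j, a j * x j = 0 := by
  classical
  set s := ∑ j ∈ (Finset.univ.erase j₁).erase j₂, a j
  obtain ⟨t, ht⟩ := Infinite.exists_notMem_finset ({0, -s / a j₂} : Finset K)
  simp only [Finset.mem_insert, Finset.mem_singleton, not_or] at ht
  have hst : s + a j₂ * t ≠ 0 := fun h0 => ht.2 (by field_simp; linear_combination h0)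
  refine ⟨fun j => if j = j₁ then -(s + a j₂ * t) / a j₁ else if j = j₂ then t else 1,
    fun j => ?_, ?_⟩
  · dsimp only
    split_ifs
    exacts [div_ne_zero (neg_ne_zero.2 hst) h₁, ht.1, one_ne_zero]
  · dsimp only
    rw [← Finset.add_sum_erase _ _ (Finset.mem_univ j₁),
      ← Finset.add_sum_erase _ _ (Finset.mem_erase.2 ⟨hne.symm, Finset.mem_univ j₂⟩),
      Finset.sum_congr rfl fun j hj => by
        rw [if_neg (Finset.ne_of_mem_erase (Finset.mem_of_mem_erase hj)),
          if_neg (Finset.ne_of_mem_erase hj), mul_one]]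
    simp only [if_pos, if_neg hne.symm]
    field_simp
    ring

theorem exists_forall_ne_eq_zero_of_sum_mul_ne_zero [Infinite K] {a : ι → K}
    (h : ∀ x : ι → K, (∀ j, x j ≠ 0) → ∑ j, a j * x j ≠ 0) :
    ∃ j, a j ≠ 0 ∧ ∀ k ≠ j, a k = 0 := by
  classical
  obtain ⟨j, -, hj⟩ := Finset.exists_ne_zero_of_sum_ne_zero (h 1 fun _ => one_ne_zero)
  refine ⟨j, by simpa using hj, fun k hkj => by_contra fun hk => ?_⟩
  obtain ⟨x, hx, hsum⟩ := exists_forall_ne_zero_and_sum_mul_eq_zero hkj hk (by simpa using hj)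
  exact h x hx hsum

theorem exists_forall_ne_eq_zero_of_prod_pow_eq_C_mul_prod_X_pow [Fintype m] [Infinite K]
    {A : Matrix m ι K} {α : m → ℕ} {β : ι → ℕ} {c : K} (hc : c ≠ 0)
    (h : ∏ i, (∑ j, A i j • (X j : MvPolynomial ι K)) ^ α i = C c * ∏ i, X i ^ β i)
    {i : m} (hi : α i ≠ 0) : ∃ j, A i j ≠ 0 ∧ ∀ k ≠ j, A i k = 0 := by
  refine exists_forall_ne_eq_zero_of_sum_mul_ne_zero fun x hx => ?_
  have heval := congrArg (eval x) h
  simp only [smul_eq_C_mul, map_prod, map_pow, map_sum, map_mul, eval_C, eval_X] at heval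
  have hrhs : c * ∏ i, x i ^ β i ≠ 0 :=
    mul_ne_zero hc (Finset.prod_ne_zero_iff.2 fun j _ => pow_ne_zero _ (hx j))
  exact (pow_ne_zero_iff hi).1 <|
    Finset.prod_ne_zero_iff.1 (heval ▸ hrhs) i (Finset.mem_univ i)

end LinearForms

namespace Matrix

variable {n R : Type*} [Fintype n] [DecidableEq n] [CommRing R] [StarRing R]
  {U : Matrix n n R}

theorem sum_mul_star_of_mem_unitaryGroup (hU : U ∈ unitaryGroup n R) (i k : n) :
    ∑ j, U i j * star (U k j) = (1 : Matrix n n R) i k := by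
  simpa [mul_apply] using congrFun (congrFun (mem_unitaryGroup_iff.1 hU) i) k

theorem sum_smul_X_ne_zero_of_mem_unitaryGroup [Nontrivial R] (hU : U ∈ unitaryGroup n R)
    (i : n) : ∑ j, U i j • (X j : MvPolynomial n R) ≠ 0 := fun h0 => by
  simpa [smul_eq_C_mul, sum_mul_star_of_mem_unitaryGroup hU] using
    congrArg (eval fun j => star (U i j)) h0

theorem eq_of_mem_unitaryGroup_of_apply_ne_zero [NoZeroDivisors R] (hU : U ∈ unitaryGroup n R)
    {i i' j : n} (hsupp : ∀ k ≠ j, U i k = 0) (hi : U i j ≠ 0) (hi' : U i' j ≠ 0) : i = i' := by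
  by_contra hne
  have horth := sum_mul_star_of_mem_unitaryGroup hU i i'
  rw [Fintype.sum_eq_single j fun k hk => by rw [hsupp k hk, zero_mul],
    one_apply_ne hne] at horth
  exact mul_ne_zero hi (star_ne_zero.2 hi') horth

end Matrix

section Monomials

variable {m ι R : Type*} [Fintype m] [CommSemiring R]

theorem prod_sum_smul_X_pow_eq_monomial [Fintype ι] (A : Matrix m ι R) (α : m → ℕ)
    (g : m → ι) (hg : ∀ i, α i ≠ 0 → ∀ k ≠ g i, A i k = 0) :
    ∏ i, (∑ j, A i j • (X j : MvPolynomial ι R)) ^ α i =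
      monomial (∑ i, Finsupp.single (g i) (α i)) (∏ i, A i (g i) ^ α i) := by
  rw [monomial_sum_prod]
  refine Finset.prod_congr rfl fun i _ => ?_
  rcases eq_or_ne (α i) 0 with hi | hi
  · simp [hi]
  · rw [Fintype.sum_eq_single (g i) fun k hk => by rw [hg i hi k hk, zero_smul], smul_eq_C_mul,
      mul_pow, ← map_pow, C_mul_X_pow_eq_monomial]

theorem C_mul_prod_X_pow_eq_monomial [Fintype ι] (c : R) (β : ι → ℕ) :
    C c * ∏ i, (X i : MvPolynomial ι R) ^ β i = monomial (∑ i, Finsupp.single i (β i)) c := by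
  simp_rw [monomial_sum_index, X_pow_eq_monomial]

end Monomials

/-- If `U` is unitary and
`∏ i (Σ j U i j • X j)^(α i) = c • ∏ i X i ^ (β i)` holds in `ℂ[X_1,…,X_d]`, then `c ≠ 0`
and `β` is a permutation of `α`: two Fock states can be deterministically related by linear
optics only if their photon counts agree up to a permutation of the modes. -/
theorem fock_state_linear_optics (d : ℕ) (U : Matrix (Fin d) (Fin d) ℂ)
    (hU : U ∈ Matrix.unitaryGroup (Fin d) ℂ) (α β : Fin d → ℕ) (c : ℂ)
    (h : ∏ i : Fin d, (∑ j : Fin d, U i j • (X j : MvPolynomial (Fin d) ℂ)) ^ (α i) =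
        C c * ∏ i : Fin d, (X i : MvPolynomial (Fin d) ℂ) ^ (β i)) :
    c ≠ 0 ∧ ∃ σ : Equiv.Perm (Fin d), ∀ i, β i = α (σ i) := by
  have hc : c ≠ 0 := by
    rintro rfl
    rw [map_zero, zero_mul, Finset.prod_eq_zero_iff] at h
    obtain ⟨i, -, hi⟩ := h
    exact pow_ne_zero _ (Matrix.sum_smul_X_ne_zero_of_mem_unitaryGroup hU i) hi
  have hrow : ∀ i, ∃ j, α i ≠ 0 → U i j ≠ 0 ∧ ∀ k ≠ j, U i k = 0 := fun i => by
    by_cases hi : α i = 0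
    · exact ⟨i, absurd hi⟩
    · obtain ⟨j, hj⟩ := exists_forall_ne_eq_zero_of_prod_pow_eq_C_mul_prod_X_pow hc h hi
      exact ⟨j, fun _ => hj⟩
  choose g hg using hrow
  rw [prod_sum_smul_X_pow_eq_monomial U α g fun i hi => (hg i hi).2,
    C_mul_prod_X_pow_eq_monomial, monomial_eq_monomial_iff] at h
  refine ⟨hc, exists_perm_of_sum_single_eq (fun i hi i' hi' hgi => ?_)
    (h.resolve_right fun h0 => hc h0.2).1⟩
  exact Matrix.eq_of_mem_unitaryGroup_of_apply_ne_zero hU (hg i hi).2 (hg i hi).1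
    (hgi ▸ (hg i' hi').1)
end

section
/- Let f = (α_{20}/√2)·X² + α_{11}·XY + (α_{02}/√2)·Y² ∈ ℂ[X,Y] with α_{20}, α_{11}, α_{02} ∈ ℂ, and let M be the 2×2 matrix with entries M_{ij} = ⟨X_j·f, X_i·f⟩ for i,j ∈ {1,2} (the one-particle block of f f†, with X_1 = X, X_2 = Y). Then det M = 3·(|α_{20}|² + |α_{11}|² + |α_{02}|²)² + |α_{11}² − 2·α_{20}·α_{02}|². In particular, when |α_{20}|² + |α_{11}|² + |α_{02}|² = 1, the quantity |α_{11}² − 2α_{20}α_{02}|² is determined by the spectral invariant det M. -/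
open MvPolynomial Finsupp

/-- The Fischer (Bombieri–Fock) inner product
`⟨f,g⟩ = Σ_α conj(c_α(f)) · c_α(g) · α!`, conjugate-linear in the first argument. -/
noncomputable def fischer {d : ℕ} (f g : MvPolynomial (Fin d) ℂ) : ℂ :=
  ∑ α ∈ f.support ∪ g.support,
    (starRingEnd ℂ) (coeff α f) * coeff α g * (α.prod fun _ m => (m.factorial : ℂ))

lemma fischer_eq_sum {d : ℕ} (f g : MvPolynomial (Fin d) ℂ) (S : Finset (Fin d →₀ ℕ))
    (hf : f.support ⊆ S) (hg : g.support ⊆ S) :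
    fischer f g = ∑ α ∈ S,
      (starRingEnd ℂ) (coeff α f) * coeff α g * (α.prod fun _ m => (m.factorial : ℂ)) := by
  unfold fischer
  refine Finset.sum_subset (Finset.union_subset hf hg) ?_
  intro x _ hx
  rw [Finset.mem_union, not_or] at hx
  rw [MvPolynomial.notMem_support_iff.mp hx.1]
  simp

noncomputable abbrev m30 : Fin 2 →₀ ℕ := Finsupp.single 0 3
noncomputable abbrev m21 : Fin 2 →₀ ℕ := Finsupp.single 0 2 + Finsupp.single 1 1
noncomputable abbrev m12 : Fin 2 →₀ ℕ := Finsupp.single 0 1 + Finsupp.single 1 2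
noncomputable abbrev m03 : Fin 2 →₀ ℕ := Finsupp.single 1 3

lemma d1 : m30 ≠ m21 := by simp [Finsupp.ext_iff, Fin.forall_fin_two, Finsupp.single_apply]
lemma d2 : m30 ≠ m12 := by simp [Finsupp.ext_iff, Fin.forall_fin_two, Finsupp.single_apply]
lemma d3 : m30 ≠ m03 := by simp [Finsupp.ext_iff, Fin.forall_fin_two, Finsupp.single_apply]
lemma d4 : m21 ≠ m12 := by simp [Finsupp.ext_iff, Fin.forall_fin_two, Finsupp.single_apply]
lemma d5 : m21 ≠ m03 := by simp [Finsupp.ext_iff, Fin.forall_fin_two, Finsupp.single_apply]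
lemma d6 : m12 ≠ m03 := by simp [Finsupp.ext_iff, Fin.forall_fin_two, Finsupp.single_apply]

lemma p30 : (m30.prod fun _ m => (m.factorial : ℂ)) = 6 := by
  rw [Finsupp.prod_fintype _ _ (fun i => by simp)]
  simp [Fin.prod_univ_two, Finsupp.single_apply]
  norm_num [Nat.factorial]
lemma p21 : (m21.prod fun _ m => (m.factorial : ℂ)) = 2 := by
  rw [Finsupp.prod_fintype _ _ (fun i => by simp)]
  simp [Fin.prod_univ_two, Finsupp.single_apply]
lemma p12 : (m12.prod fun _ m => (m.factorial : ℂ)) = 2 := by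
  rw [Finsupp.prod_fintype _ _ (fun i => by simp)]
  simp [Fin.prod_univ_two, Finsupp.single_apply]
lemma p03 : (m03.prod fun _ m => (m.factorial : ℂ)) = 6 := by
  rw [Finsupp.prod_fintype _ _ (fun i => by simp)]
  simp [Fin.prod_univ_two, Finsupp.single_apply]
  norm_num [Nat.factorial]

noncomputable abbrev S4 : Finset (Fin 2 →₀ ℕ) := {m30, m21, m12, m03}

noncomputable def g0 (x y z : ℂ) : MvPolynomial (Fin 2) ℂ :=
  monomial m30 x + monomial m21 y + monomial m12 z
noncomputable def g1 (x y z : ℂ) : MvPolynomial (Fin 2) ℂ :=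
  monomial m21 x + monomial m12 y + monomial m03 z

lemma supp_g0 (x y z : ℂ) : (g0 x y z).support ⊆ S4 := by
  refine (MvPolynomial.support_add).trans (Finset.union_subset
    ((MvPolynomial.support_add).trans (Finset.union_subset ?_ ?_)) ?_) <;>
  · refine MvPolynomial.support_monomial_subset.trans ?_
    simp [S4]
lemma supp_g1 (x y z : ℂ) : (g1 x y z).support ⊆ S4 := by
  refine (MvPolynomial.support_add).trans (Finset.union_subset
    ((MvPolynomial.support_add).trans (Finset.union_subset ?_ ?_)) ?_) <;>
  · refine MvPolynomial.support_monomial_subset.trans ?_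
    simp [S4]

lemma sum_S4 (F : (Fin 2 →₀ ℕ) → ℂ) : ∑ α ∈ S4, F α = F m30 + F m21 + F m12 + F m03 := by
  rw [show S4 = insert m30 (insert m21 (insert m12 {m03})) from rfl,
    Finset.sum_insert (by simp [d1, d2, d3]),
    Finset.sum_insert (by simp [d4, d5]),
    Finset.sum_insert (by simp [d6]),
    Finset.sum_singleton]
  ring

lemma coeffs_g0 (x y z : ℂ) : coeff m30 (g0 x y z) = x ∧ coeff m21 (g0 x y z) = y ∧
    coeff m12 (g0 x y z) = z ∧ coeff m03 (g0 x y z) = 0 := by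
  refine ⟨?_, ?_, ?_, ?_⟩ <;>
    simp [g0, coeff_add, coeff_monomial, d1, d2, d3, d4, d5, d6,
      d1.symm, d2.symm, d3.symm, d4.symm, d5.symm, d6.symm]

lemma coeffs_g1 (x y z : ℂ) : coeff m30 (g1 x y z) = 0 ∧ coeff m21 (g1 x y z) = x ∧
    coeff m12 (g1 x y z) = y ∧ coeff m03 (g1 x y z) = z := by
  refine ⟨?_, ?_, ?_, ?_⟩ <;>
    simp [g1, coeff_add, coeff_monomial, d1, d2, d3, d4, d5, d6,
      d1.symm, d2.symm, d3.symm, d4.symm, d5.symm, d6.symm]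

lemma fischer_g0_g0 (x y z x' y' z' : ℂ) :
    fischer (g0 x y z) (g0 x' y' z') =
      (starRingEnd ℂ) x * x' * 6 + (starRingEnd ℂ) y * y' * 2 + (starRingEnd ℂ) z * z' * 2 := by
  rw [fischer_eq_sum _ _ S4 (supp_g0 _ _ _) (supp_g0 _ _ _), sum_S4]
  obtain ⟨a1, a2, a3, a4⟩ := coeffs_g0 x y z
  obtain ⟨b1, b2, b3, b4⟩ := coeffs_g0 x' y' z'
  rw [a1, a2, a3, a4, b1, b2, b3, b4, p30, p21, p12, p03]
  ring

lemma fischer_g0_g1 (x y z x' y' z' : ℂ) :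
    fischer (g0 x y z) (g1 x' y' z') =
      (starRingEnd ℂ) y * x' * 2 + (starRingEnd ℂ) z * y' * 2 := by
  rw [fischer_eq_sum _ _ S4 (supp_g0 _ _ _) (supp_g1 _ _ _), sum_S4]
  obtain ⟨a1, a2, a3, a4⟩ := coeffs_g0 x y z
  obtain ⟨b1, b2, b3, b4⟩ := coeffs_g1 x' y' z'
  rw [a1, a2, a3, a4, b1, b2, b3, b4, p30, p21, p12, p03]
  simp only [map_zero, zero_mul, mul_zero, add_zero, zero_add]

lemma fischer_g1_g0 (x y z x' y' z' : ℂ) :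
    fischer (g1 x y z) (g0 x' y' z') =
      (starRingEnd ℂ) x * y' * 2 + (starRingEnd ℂ) y * z' * 2 := by
  rw [fischer_eq_sum _ _ S4 (supp_g1 _ _ _) (supp_g0 _ _ _), sum_S4]
  obtain ⟨a1, a2, a3, a4⟩ := coeffs_g1 x y z
  obtain ⟨b1, b2, b3, b4⟩ := coeffs_g0 x' y' z'
  rw [a1, a2, a3, a4, b1, b2, b3, b4, p30, p21, p12, p03]
  simp only [map_zero, zero_mul, mul_zero, add_zero, zero_add]

lemma fischer_g1_g1 (x y z x' y' z' : ℂ) :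
    fischer (g1 x y z) (g1 x' y' z') =
      (starRingEnd ℂ) x * x' * 2 + (starRingEnd ℂ) y * y' * 2 + (starRingEnd ℂ) z * z' * 6 := by
  rw [fischer_eq_sum _ _ S4 (supp_g1 _ _ _) (supp_g1 _ _ _), sum_S4]
  obtain ⟨a1, a2, a3, a4⟩ := coeffs_g1 x y z
  obtain ⟨b1, b2, b3, b4⟩ := coeffs_g1 x' y' z'
  rw [a1, a2, a3, a4, b1, b2, b3, b4, p30, p21, p12, p03]
  ring

/-- For the two-photon two-mode state
`f = (α₂₀/√2)X² + α₁₁XY + (α₀₂/√2)Y²`, the determinant of the one-particle block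
`M i j = ⟨X_j·f, X_i·f⟩` of `f f†` equals
`3(|α₂₀|²+|α₁₁|²+|α₀₂|²)² + |α₁₁² − 2α₂₀α₀₂|²`. -/
theorem det_one_particle_block (α₂₀ α₁₁ α₀₂ : ℂ)
    (f : MvPolynomial (Fin 2) ℂ)
    (hf : f = C (α₂₀ / (Real.sqrt 2 : ℂ)) * X 0 ^ 2 + C α₁₁ * (X 0 * X 1) +
        C (α₀₂ / (Real.sqrt 2 : ℂ)) * X 1 ^ 2)
    (M : Matrix (Fin 2) (Fin 2) ℂ)
    (hM : ∀ i j, M i j = fischer (X j * f) (X i * f)) :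
    M.det = ((3 * (Complex.normSq α₂₀ + Complex.normSq α₁₁ + Complex.normSq α₀₂) ^ 2
      + Complex.normSq (α₁₁ ^ 2 - 2 * α₂₀ * α₀₂) : ℝ) : ℂ) := by
  have h0 : X (0 : Fin 2) * f = g0 (α₂₀ / (Real.sqrt 2 : ℂ)) α₁₁ (α₀₂ / (Real.sqrt 2 : ℂ)) := by
    subst hf
    unfold g0
    simp only [X, monomial_pow, one_pow, monomial_mul, C_mul_monomial, mul_one, one_mul, mul_add]
    have e1 : (Finsupp.single 0 1 + 2 • Finsupp.single 0 1 : Fin 2 →₀ ℕ) = m30 := by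
      ext i; fin_cases i <;> simp
    have e2 : (Finsupp.single 0 1 + (Finsupp.single 0 1 + Finsupp.single 1 1) : Fin 2 →₀ ℕ) = m21 := by
      ext i; fin_cases i <;> simp [Finsupp.single_apply]
    have e3 : (Finsupp.single 0 1 + 2 • Finsupp.single 1 1 : Fin 2 →₀ ℕ) = m12 := by
      ext i; fin_cases i <;> simp [Finsupp.single_apply]
    rw [e1, e2, e3]
  have h1 : X (1 : Fin 2) * f = g1 (α₂₀ / (Real.sqrt 2 : ℂ)) α₁₁ (α₀₂ / (Real.sqrt 2 : ℂ)) := by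
    subst hf
    unfold g1
    simp only [X, monomial_pow, one_pow, monomial_mul, C_mul_monomial, mul_one, one_mul, mul_add]
    have e1 : (Finsupp.single 1 1 + 2 • Finsupp.single 0 1 : Fin 2 →₀ ℕ) = m21 := by
      ext i; fin_cases i <;> simp [Finsupp.single_apply]
    have e2 : (Finsupp.single 1 1 + (Finsupp.single 0 1 + Finsupp.single 1 1) : Fin 2 →₀ ℕ) = m12 := by
      ext i; fin_cases i <;> simp [Finsupp.single_apply]
    have e3 : (Finsupp.single 1 1 + 2 • Finsupp.single 1 1 : Fin 2 →₀ ℕ) = m03 := by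
      ext i; fin_cases i <;> simp [Finsupp.single_apply]
    rw [e1, e2, e3]
  rw [Matrix.det_fin_two, hM, hM, hM, hM, h0, h1,
    fischer_g0_g0, fischer_g1_g1, fischer_g0_g1, fischer_g1_g0]
  have hs : ((Real.sqrt 2 : ℝ) : ℂ) * ((Real.sqrt 2 : ℝ) : ℂ) = 2 := by
    have h := Real.mul_self_sqrt (by norm_num : (0:ℝ) ≤ 2)
    exact_mod_cast congrArg (Complex.ofReal) h
  have hs0 : ((Real.sqrt 2 : ℝ) : ℂ) ≠ 0 :=
    Complex.ofReal_ne_zero.mpr (Real.sqrt_ne_zero'.mpr (by norm_num))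
  have hconj : (starRingEnd ℂ) ((Real.sqrt 2 : ℝ) : ℂ) = ((Real.sqrt 2 : ℝ) : ℂ) :=
    Complex.conj_ofReal _
  simp only [map_div₀, hconj]
  push_cast [Complex.normSq_eq_conj_mul_self]
  simp only [map_sub, map_add, map_mul, map_pow, map_ofNat]
  have h2 : ((Real.sqrt 2 : ℝ) : ℂ) ^ 2 = 2 := by rw [sq]; exact hs
  have h4 : ((Real.sqrt 2 : ℝ) : ℂ) ^ 4 = 4 := by
    rw [(by ring : ((Real.sqrt 2 : ℝ) : ℂ) ^ 4 = (((Real.sqrt 2 : ℝ) : ℂ) ^ 2) ^ 2), h2]; norm_num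
  have h6 : ((Real.sqrt 2 : ℝ) : ℂ) ^ 6 = 8 := by
    rw [(by ring : ((Real.sqrt 2 : ℝ) : ℂ) ^ 6 = (((Real.sqrt 2 : ℝ) : ℂ) ^ 2) ^ 3), h2]; norm_num
  field_simp
  ring_nf
  simp only [h2, h4, h6]
  ring
end

section
/- Let f = (α_{20}/√2)·X² + α_{11}·XY + (α_{02}/√2)·Y² ∈ ℂ[X,Y] with α_{20}, α_{11}, α_{02} ∈ ℂ satisfying |α_{20}|² + |α_{11}|² + |α_{02}|² = 1. Then (1/6)·‖f²‖² = 1 − (1/3)·|α_{11}² − 2·α_{20}·α_{02}|², where ‖·‖ is the Fischer norm on homogeneous polynomials of degree 4. (The moment ⟨Ω| f² f†² |Ω⟩ of a normalized 2-photon 2-mode state equals 6·(1 − |α_{11}² − 2α_{20}α_{02}|²/3).) -/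
open MvPolynomial

noncomputable def ee (i j : ℕ) : Fin 2 →₀ ℕ := Finsupp.single 0 i + Finsupp.single 1 j

lemma ee_apply0 (i j : ℕ) : ee i j 0 = i := by simp [ee, Finsupp.single_apply]
lemma ee_apply1 (i j : ℕ) : ee i j 1 = j := by simp [ee, Finsupp.single_apply]

lemma ee_eq_iff {i j i' j' : ℕ} : ee i j = ee i' j' ↔ i = i' ∧ j = j' := by
  constructor
  · intro h
    constructor
    · have := congrArg (fun f : Fin 2 →₀ ℕ => f 0) h
      simpa [ee_apply0] using this
    · have := congrArg (fun f : Fin 2 →₀ ℕ => f 1) h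
      simpa [ee_apply1] using this
  · rintro ⟨rfl, rfl⟩; rfl

lemma ee_weight (i j : ℕ) : (ee i j).prod (fun _ m => (m.factorial : ℝ)) =
    (i.factorial : ℝ) * j.factorial := by
  rw [Finsupp.prod_fintype]
  · rw [Fin.prod_univ_two, ee_apply0, ee_apply1]
  · intro x; simp

lemma hmono (a b c : ℂ) : C a * X 0 ^ 2 + C b * (X 0 * X 1) + C c * X 1 ^ 2
    = monomial (ee 2 0) a + monomial (ee 1 1) b + monomial (ee 0 2) c := by
  have hx : (X 0 * X 1 : MvPolynomial (Fin 2) ℂ) = monomial (ee 1 1) 1 := by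
    rw [X, X, monomial_mul, mul_one]; rfl
  have e20 : (Finsupp.single 0 2 : Fin 2 →₀ ℕ) = ee 2 0 := by
    ext x; fin_cases x <;> simp [ee, Finsupp.single_apply]
  have e02 : (Finsupp.single 1 2 : Fin 2 →₀ ℕ) = ee 0 2 := by
    ext x; fin_cases x <;> simp [ee, Finsupp.single_apply]
  rw [hx, X_pow_eq_monomial, X_pow_eq_monomial, C_mul_monomial, C_mul_monomial,
    C_mul_monomial, mul_one, mul_one, mul_one, e20, e02]

lemma hsq (a b c : ℂ) :
    (monomial (ee 2 0) a + monomial (ee 1 1) b + monomial (ee 0 2) c : MvPolynomial (Fin 2) ℂ) ^ 2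
    = monomial (ee 4 0) (a^2) + monomial (ee 3 1) (2*a*b) + monomial (ee 2 2) (b^2+2*a*c)
      + monomial (ee 1 3) (2*b*c) + monomial (ee 0 4) (c^2) := by
  have h1 : ee 2 0 + ee 2 0 = ee 4 0 := by ext x; fin_cases x <;> simp [ee, Finsupp.single_apply]
  have h2 : ee 2 0 + ee 1 1 = ee 3 1 := by ext x; fin_cases x <;> simp [ee, Finsupp.single_apply]
  have h3 : ee 2 0 + ee 0 2 = ee 2 2 := by ext x; fin_cases x <;> simp [ee, Finsupp.single_apply]
  have h4 : ee 1 1 + ee 2 0 = ee 3 1 := by ext x; fin_cases x <;> simp [ee, Finsupp.single_apply]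
  have h5 : ee 1 1 + ee 1 1 = ee 2 2 := by ext x; fin_cases x <;> simp [ee, Finsupp.single_apply]
  have h6 : ee 1 1 + ee 0 2 = ee 1 3 := by ext x; fin_cases x <;> simp [ee, Finsupp.single_apply]
  have h7 : ee 0 2 + ee 2 0 = ee 2 2 := by ext x; fin_cases x <;> simp [ee, Finsupp.single_apply]
  have h8 : ee 0 2 + ee 1 1 = ee 1 3 := by ext x; fin_cases x <;> simp [ee, Finsupp.single_apply]
  have h9 : ee 0 2 + ee 0 2 = ee 0 4 := by ext x; fin_cases x <;> simp [ee, Finsupp.single_apply]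
  rw [show (a^2) = a*a by ring, show (2*a*b) = a*b + b*a by ring,
    show b^2+2*a*c = a*c + (b*b + c*a) by ring, show (2*b*c) = b*c + c*b by ring,
    show (c^2) = c*c by ring]
  simp only [sq, add_mul, mul_add, monomial_mul, h1, h2, h3, h4, h5, h6, h7, h8, h9, map_add]
  abel

/-- For the normalized two-photon two-mode state
`f = (α₂₀/√2)X² + α₁₁XY + (α₀₂/√2)Y²` with `|α₂₀|²+|α₁₁|²+|α₀₂|² = 1`, the second moment
satisfies `(1/6)‖f²‖² = 1 − (1/3)|α₁₁² − 2α₂₀α₀₂|²`. -/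
theorem moment_two_photons_two_modes (α₂₀ α₁₁ α₀₂ : ℂ)
    (hnorm : Complex.normSq α₂₀ + Complex.normSq α₁₁ + Complex.normSq α₀₂ = 1)
    (f : MvPolynomial (Fin 2) ℂ)
    (hf : f = C (α₂₀ / (Real.sqrt 2 : ℂ)) * X 0 ^ 2 + C α₁₁ * (X 0 * X 1) +
        C (α₀₂ / (Real.sqrt 2 : ℂ)) * X 1 ^ 2) :
    (1 / 6 : ℝ) * fischerNormSq (f ^ 2) =
      1 - (1 / 3 : ℝ) * Complex.normSq (α₁₁ ^ 2 - 2 * α₂₀ * α₀₂) := by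
  set a : ℂ := α₂₀ / (Real.sqrt 2 : ℂ) with ha
  set c : ℂ := α₀₂ / (Real.sqrt 2 : ℂ) with hc
  have key : f ^ 2 = monomial (ee 4 0) (a^2) + monomial (ee 3 1) (2*a*α₁₁)
      + monomial (ee 2 2) (α₁₁^2+2*a*c) + monomial (ee 1 3) (2*α₁₁*c)
      + monomial (ee 0 4) (c^2) := by
    rw [hf, hmono, hsq]
  have hsupp : (f ^ 2).support ⊆ ({ee 4 0, ee 3 1, ee 2 2, ee 1 3, ee 0 4} :
      Finset (Fin 2 →₀ ℕ)) := by
    intro d hd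
    rw [mem_support_iff, key] at hd
    by_contra hmem
    simp only [Finset.mem_insert, Finset.mem_singleton] at hmem
    push_neg at hmem
    obtain ⟨n1, n2, n3, n4, n5⟩ := hmem
    simp only [coeff_add, coeff_monomial, if_neg (Ne.symm n1), if_neg (Ne.symm n2),
      if_neg (Ne.symm n3), if_neg (Ne.symm n4), if_neg (Ne.symm n5)] at hd
    simp at hd
  have hval : fischerNormSq (f ^ 2) =
      ∑ α ∈ ({ee 4 0, ee 3 1, ee 2 2, ee 1 3, ee 0 4} : Finset (Fin 2 →₀ ℕ)),
        Complex.normSq (coeff α (f ^ 2)) * (α.prod fun _ m => (m.factorial : ℝ)) := by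
    rw [fischerNormSq]
    exact Finset.sum_subset hsupp (fun x _ hx => by rw [notMem_support_iff.mp hx]; simp)
  rw [hval]
  rw [Finset.sum_insert (by simp [ee_eq_iff]), Finset.sum_insert (by simp [ee_eq_iff]),
    Finset.sum_insert (by simp [ee_eq_iff]), Finset.sum_insert (by simp [ee_eq_iff]),
    Finset.sum_singleton]
  have c1 : coeff (ee 4 0) (f ^ 2) = a^2 := by rw [key]; simp [coeff_monomial, ee_eq_iff]
  have c2 : coeff (ee 3 1) (f ^ 2) = 2*a*α₁₁ := by rw [key]; simp [coeff_monomial, ee_eq_iff]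
  have c3 : coeff (ee 2 2) (f ^ 2) = α₁₁^2+2*a*c := by rw [key]; simp [coeff_monomial, ee_eq_iff]
  have c4 : coeff (ee 1 3) (f ^ 2) = 2*α₁₁*c := by rw [key]; simp [coeff_monomial, ee_eq_iff]
  have c5 : coeff (ee 0 4) (f ^ 2) = c^2 := by rw [key]; simp [coeff_monomial, ee_eq_iff]
  rw [c1, c2, c3, c4, c5, ee_weight, ee_weight, ee_weight, ee_weight, ee_weight]
  -- numeric factorials
  norm_num [Nat.factorial]
  -- now pure complex/real arithmetic
  have hsne : ((Real.sqrt 2 : ℝ) : ℂ) ≠ 0 := by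
    simpa using (Real.sqrt_ne_zero' (x := 2)).mpr (by norm_num)
  have hss : ((Real.sqrt 2 : ℝ) : ℂ) * ((Real.sqrt 2 : ℝ) : ℂ) = 2 := by
    rw [← Complex.ofReal_mul, Real.mul_self_sqrt (by norm_num)]
    norm_num
  have hs : Complex.normSq ((Real.sqrt 2 : ℝ) : ℂ) = 2 := by
    rw [Complex.normSq_ofReal, Real.mul_self_sqrt (by norm_num)]
  have hss2 : ((Real.sqrt 2 : ℝ) : ℂ) ^ 2 = 2 := by rw [sq]; exact hss
  have hna : Complex.normSq a = Complex.normSq α₂₀ / 2 := by rw [ha, map_div₀, hs]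
  have hnc : Complex.normSq c = Complex.normSq α₀₂ / 2 := by rw [hc, map_div₀, hs]
  have h3 : α₁₁^2 + 2*a*c = α₁₁^2 + α₂₀*α₀₂ := by
    rw [ha, hc]; field_simp; linear_combination (-α₂₀*α₀₂)*hss2
  rw [hna, hnc, h3]
  simp only [Complex.normSq_apply, Complex.add_re, Complex.add_im, Complex.sub_re,
    Complex.sub_im, Complex.mul_re, Complex.mul_im, pow_two, Complex.re_ofNat,
    Complex.im_ofNat] at hnorm ⊢
  linear_combination (α₂₀.re*α₂₀.re + α₂₀.im*α₂₀.im + α₁₁.re*α₁₁.re + α₁₁.im*α₁₁.im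
    + α₀₂.re*α₀₂.re + α₀₂.im*α₀₂.im + 1) * hnorm
end

section
/- In ℂ[a_1,…,a_4,b_1,…,b_4], let s_{ij} := (a_i·b_j − a_j·b_i)/√2. Then the three degree-4 polynomials s_{12}s_{34}, s_{13}s_{42}, s_{14}s_{23} each have Fischer norm 1, and their pairwise Fischer inner products all equal −1/2: ⟨s_{12}s_{34}, s_{13}s_{42}⟩ = ⟨s_{13}s_{42}, s_{14}s_{23}⟩ = ⟨s_{12}s_{34}, s_{14}s_{23}⟩ = −1/2. (The three pairings of two-photon singlets span a two-dimensional singlet subspace of 4 photons in 8 modes.) -/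
open MvPolynomial

noncomputable def sgl (i j : Fin 4) : MvPolynomial (Fin 8) ℂ :=
  ((Real.sqrt 2 : ℂ))⁻¹ •
    (X (Fin.castAdd 4 i) * X (Fin.natAdd 4 j) - X (Fin.castAdd 4 j) * X (Fin.natAdd 4 i))

noncomputable def E (i j k l : Fin 8) : Fin 8 →₀ ℕ :=
  Finsupp.single i 1 + Finsupp.single j 1 + Finsupp.single k 1 + Finsupp.single l 1

noncomputable def M (i j k l : Fin 8) : MvPolynomial (Fin 8) ℂ := monomial (E i j k l) 1

lemma decomp1 : sgl 0 1 * sgl 2 3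
    = (2:ℂ)⁻¹ • (M 0 2 5 7 - M 0 3 5 6 - M 1 2 4 7 + M 1 3 4 6) := by
  rw [sgl, sgl, smul_mul_smul_comm]
  congr 1
  · rw [← Complex.ofReal_inv, ← Complex.ofReal_mul, ← mul_inv,
      Real.mul_self_sqrt (by norm_num)]
    norm_num
  · show ((X 0 * X 5 - X 1 * X 4) * (X 2 * X 7 - X 3 * X 6) : MvPolynomial (Fin 8) ℂ) = _
    simp only [M, E, X, monomial_mul, mul_sub, sub_mul, one_mul]
    ring_nf
    simp only [add_assoc, add_left_comm, add_comm]; ring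

lemma decomp2 : sgl 0 2 * sgl 3 1
    = (2:ℂ)⁻¹ • (M 0 3 5 6 - M 0 1 6 7 - M 2 3 4 5 + M 1 2 4 7) := by
  rw [sgl, sgl, smul_mul_smul_comm]
  congr 1
  · rw [← Complex.ofReal_inv, ← Complex.ofReal_mul, ← mul_inv,
      Real.mul_self_sqrt (by norm_num)]
    norm_num
  · show ((X 0 * X 6 - X 2 * X 4) * (X 3 * X 5 - X 1 * X 7) : MvPolynomial (Fin 8) ℂ) = _
    simp only [M, E, X, monomial_mul, mul_sub, sub_mul, one_mul]
    ring_nf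
    simp only [add_assoc, add_left_comm, add_comm]; ring

lemma decomp3 : sgl 0 3 * sgl 1 2
    = (2:ℂ)⁻¹ • (M 0 1 6 7 - M 0 2 5 7 - M 1 3 4 6 + M 2 3 4 5) := by
  rw [sgl, sgl, smul_mul_smul_comm]
  congr 1
  · rw [← Complex.ofReal_inv, ← Complex.ofReal_mul, ← mul_inv,
      Real.mul_self_sqrt (by norm_num)]
    norm_num
  · show ((X 0 * X 7 - X 3 * X 4) * (X 1 * X 6 - X 2 * X 5) : MvPolynomial (Fin 8) ℂ) = _
    simp only [M, E, X, monomial_mul, mul_sub, sub_mul, one_mul]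
    ring_nf
    simp only [add_assoc, add_left_comm, add_comm]; ring

-- disequalities
lemma neAB : E 0 2 5 7 ≠ E 0 3 5 6 := fun h => by simpa [E, Finsupp.single_apply] using DFunLike.congr_fun h 2
lemma neAC : E 0 2 5 7 ≠ E 1 2 4 7 := fun h => by simpa [E, Finsupp.single_apply] using DFunLike.congr_fun h 0
lemma neAD : E 0 2 5 7 ≠ E 1 3 4 6 := fun h => by simpa [E, Finsupp.single_apply] using DFunLike.congr_fun h 0
lemma neAF : E 0 2 5 7 ≠ E 0 1 6 7 := fun h => by simpa [E, Finsupp.single_apply] using DFunLike.congr_fun h 2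
lemma neAG : E 0 2 5 7 ≠ E 2 3 4 5 := fun h => by simpa [E, Finsupp.single_apply] using DFunLike.congr_fun h 0
lemma neBC : E 0 3 5 6 ≠ E 1 2 4 7 := fun h => by simpa [E, Finsupp.single_apply] using DFunLike.congr_fun h 0
lemma neBD : E 0 3 5 6 ≠ E 1 3 4 6 := fun h => by simpa [E, Finsupp.single_apply] using DFunLike.congr_fun h 0
lemma neBF : E 0 3 5 6 ≠ E 0 1 6 7 := fun h => by simpa [E, Finsupp.single_apply] using DFunLike.congr_fun h 3
lemma neBG : E 0 3 5 6 ≠ E 2 3 4 5 := fun h => by simpa [E, Finsupp.single_apply] using DFunLike.congr_fun h 0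
lemma neCD : E 1 2 4 7 ≠ E 1 3 4 6 := fun h => by simpa [E, Finsupp.single_apply] using DFunLike.congr_fun h 2
lemma neCF : E 1 2 4 7 ≠ E 0 1 6 7 := fun h => by simpa [E, Finsupp.single_apply] using DFunLike.congr_fun h 2
lemma neCG : E 1 2 4 7 ≠ E 2 3 4 5 := fun h => by simpa [E, Finsupp.single_apply] using DFunLike.congr_fun h 1
lemma neDF : E 1 3 4 6 ≠ E 0 1 6 7 := fun h => by simpa [E, Finsupp.single_apply] using DFunLike.congr_fun h 3
lemma neDG : E 1 3 4 6 ≠ E 2 3 4 5 := fun h => by simpa [E, Finsupp.single_apply] using DFunLike.congr_fun h 1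
lemma neFG : E 0 1 6 7 ≠ E 2 3 4 5 := fun h => by simpa [E, Finsupp.single_apply] using DFunLike.congr_fun h 0

lemma prod_fact_one {e : Fin 8 →₀ ℕ} (h : ∀ x, e x ≤ 1) :
    (e.prod fun _ m => (m.factorial:ℂ)) = 1 := by
  rw [Finsupp.prod]
  apply Finset.prod_eq_one
  intro x _
  rcases Nat.le_one_iff_eq_zero_or_eq_one.mp (h x) with h'|h' <;> rw [h'] <;>
    norm_num [Nat.factorial]

lemma fA : ((E 0 2 5 7).prod fun _ m => (m.factorial:ℂ)) = 1 :=
  prod_fact_one (by intro x; fin_cases x <;> simp [E, Finsupp.single_apply])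
lemma fB : ((E 0 3 5 6).prod fun _ m => (m.factorial:ℂ)) = 1 :=
  prod_fact_one (by intro x; fin_cases x <;> simp [E, Finsupp.single_apply])
lemma fC : ((E 1 2 4 7).prod fun _ m => (m.factorial:ℂ)) = 1 :=
  prod_fact_one (by intro x; fin_cases x <;> simp [E, Finsupp.single_apply])
lemma fD : ((E 1 3 4 6).prod fun _ m => (m.factorial:ℂ)) = 1 :=
  prod_fact_one (by intro x; fin_cases x <;> simp [E, Finsupp.single_apply])
lemma fF : ((E 0 1 6 7).prod fun _ m => (m.factorial:ℂ)) = 1 :=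
  prod_fact_one (by intro x; fin_cases x <;> simp [E, Finsupp.single_apply])
lemma fG : ((E 2 3 4 5).prod fun _ m => (m.factorial:ℂ)) = 1 :=
  prod_fact_one (by intro x; fin_cases x <;> simp [E, Finsupp.single_apply])

noncomputable def S : Finset (Fin 8 →₀ ℕ) :=
  {E 0 2 5 7, E 0 3 5 6, E 1 2 4 7, E 1 3 4 6, E 0 1 6 7, E 2 3 4 5}

lemma fischer_eq {d : ℕ} (f g : MvPolynomial (Fin d) ℂ) (T : Finset (Fin d →₀ ℕ))
    (hf : f.support ⊆ T) (hg : g.support ⊆ T) :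
    fischer f g = ∑ α ∈ T,
      (starRingEnd ℂ) (coeff α f) * coeff α g * (α.prod fun _ m => (m.factorial : ℂ)) := by
  rw [fischer]
  apply Finset.sum_subset (Finset.union_subset hf hg)
  intro x _ hx
  simp only [Finset.mem_union, mem_support_iff, not_or, not_not] at hx
  simp [hx.1]

lemma supp_sub (c1 c2 c3 c4 : ℂ) (a b c d : Fin 8 →₀ ℕ) (hS : ({a, b, c, d} : Finset _) ⊆ S) :
    (monomial a c1 + monomial b c2 + monomial c c3 + monomial d c4).support ⊆ S := by
  intro α hα
  by_contra h
  have := mem_support_iff.mp hα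
  apply this
  simp only [Finset.insert_subset_iff, Finset.singleton_subset_iff] at hS
  simp only [coeff_add, coeff_monomial]
  rw [if_neg (show ¬ a = α from fun he => h (he ▸ hS.1)),
    if_neg (show ¬ b = α from fun he => h (he ▸ hS.2.1)),
    if_neg (show ¬ c = α from fun he => h (he ▸ hS.2.2.1)),
    if_neg (show ¬ d = α from fun he => h (he ▸ hS.2.2.2))]
  ring

lemma memS1 : (E 0 2 5 7) ∈ S := by simp [S]
lemma memS2 : (E 0 3 5 6) ∈ S := by simp [S]
lemma memS3 : (E 1 2 4 7) ∈ S := by simp [S]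
lemma memS4 : (E 1 3 4 6) ∈ S := by simp [S]
lemma memS5 : (E 0 1 6 7) ∈ S := by simp [S]
lemma memS6 : (E 2 3 4 5) ∈ S := by simp [S]

lemma supp1 : ((2:ℂ)⁻¹ • (M 0 2 5 7 - M 0 3 5 6 - M 1 2 4 7 + M 1 3 4 6)).support ⊆ S := by
  refine (Finsupp.support_smul).trans ?_
  have : (M 0 2 5 7 - M 0 3 5 6 - M 1 2 4 7 + M 1 3 4 6)
      = monomial (E 0 2 5 7) 1 + monomial (E 0 3 5 6) (-1)
        + monomial (E 1 2 4 7) (-1) + monomial (E 1 3 4 6) 1 := by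
    simp only [M, sub_eq_add_neg, ← map_neg]
  rw [this]
  exact supp_sub _ _ _ _ _ _ _ _ (by
    simp only [Finset.insert_subset_iff, Finset.singleton_subset_iff]
    exact ⟨memS1, memS2, memS3, memS4⟩)

lemma supp2 : ((2:ℂ)⁻¹ • (M 0 3 5 6 - M 0 1 6 7 - M 2 3 4 5 + M 1 2 4 7)).support ⊆ S := by
  refine (Finsupp.support_smul).trans ?_
  have : (M 0 3 5 6 - M 0 1 6 7 - M 2 3 4 5 + M 1 2 4 7)
      = monomial (E 0 3 5 6) 1 + monomial (E 0 1 6 7) (-1)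
        + monomial (E 2 3 4 5) (-1) + monomial (E 1 2 4 7) 1 := by
    simp only [M, sub_eq_add_neg, ← map_neg]
  rw [this]
  exact supp_sub _ _ _ _ _ _ _ _ (by
    simp only [Finset.insert_subset_iff, Finset.singleton_subset_iff]
    exact ⟨memS2, memS5, memS6, memS3⟩)

lemma supp3 : ((2:ℂ)⁻¹ • (M 0 1 6 7 - M 0 2 5 7 - M 1 3 4 6 + M 2 3 4 5)).support ⊆ S := by
  refine (Finsupp.support_smul).trans ?_
  have : (M 0 1 6 7 - M 0 2 5 7 - M 1 3 4 6 + M 2 3 4 5)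
      = monomial (E 0 1 6 7) 1 + monomial (E 0 2 5 7) (-1)
        + monomial (E 1 3 4 6) (-1) + monomial (E 2 3 4 5) 1 := by
    simp only [M, sub_eq_add_neg, ← map_neg]
  rw [this]
  exact supp_sub _ _ _ _ _ _ _ _ (by
    simp only [Finset.insert_subset_iff, Finset.singleton_subset_iff]
    exact ⟨memS5, memS1, memS4, memS6⟩)

/-- The three singlet pairings `s₁₂s₃₄`, `s₁₃s₄₂`, `s₁₄s₂₃` have Fischer
norm `1` and pairwise Fischer inner products `−1/2`. -/
theorem singlet_pairings_inner_products :
    fischer (sgl 0 1 * sgl 2 3) (sgl 0 1 * sgl 2 3) = 1 ∧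
    fischer (sgl 0 2 * sgl 3 1) (sgl 0 2 * sgl 3 1) = 1 ∧
    fischer (sgl 0 3 * sgl 1 2) (sgl 0 3 * sgl 1 2) = 1 ∧
    fischer (sgl 0 1 * sgl 2 3) (sgl 0 2 * sgl 3 1) = -(1 / 2) ∧
    fischer (sgl 0 2 * sgl 3 1) (sgl 0 3 * sgl 1 2) = -(1 / 2) ∧
    fischer (sgl 0 1 * sgl 2 3) (sgl 0 3 * sgl 1 2) = -(1 / 2) := by
  rw [decomp1, decomp2, decomp3]
  refine ⟨?_, ?_, ?_, ?_, ?_, ?_⟩ <;>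
  · first
    | rw [fischer_eq _ _ S supp1 supp1] | rw [fischer_eq _ _ S supp2 supp2]
    | rw [fischer_eq _ _ S supp3 supp3] | rw [fischer_eq _ _ S supp1 supp2]
    | rw [fischer_eq _ _ S supp2 supp3] | rw [fischer_eq _ _ S supp1 supp3]
    simp [S, Finset.sum_insert, M, coeff_monomial,
      neAB, neAC, neAD, neAF, neAG, neBC, neBD, neBF, neBG, neCD, neCF, neCG, neDF, neDG, neFG,
      neAB.symm, neAC.symm, neAD.symm, neAF.symm, neAG.symm, neBC.symm, neBD.symm, neBF.symm,
      neBG.symm, neCD.symm, neCF.symm, neCG.symm, neDF.symm, neDG.symm, neFG.symm,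
      fA, fB, fC, fD, fF, fG, map_inv₀, map_ofNat]
    norm_num
end

section
/- In ℂ[a_1,…,a_4,b_1,…,b_4], let s_{ij} := (a_i b_j − a_j b_i)/√2, ε := exp(2πi/3), l := (√2/3)(s_{12}s_{34} + ε·s_{13}s_{42} + ε²·s_{14}s_{23}), r := (√2/3)(s_{12}s_{34} + ε²·s_{13}s_{42} + ε·s_{14}s_{23}), and for real θ, φ set f := cos(θ/2)·l + sin(θ/2)·e^{iφ}·r. Then the Fischer norm of f² satisfies ‖f²‖² = 17/2 − (1/2)·cos(2θ). (The second moment ⟨Ω| f² f†² |Ω⟩ of a four-photon singlet state yields the linear-optics invariant cos(2θ).) -/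
open MvPolynomial

/-- `ε = exp(2πi/3)`. -/
noncomputable def epsilon : ℂ := Complex.exp (2 * Real.pi * Complex.I / 3)

/-- `l = (√2/3)(s₁₂s₃₄ + ε·s₁₃s₄₂ + ε²·s₁₄s₂₃)`. -/
noncomputable def singletL : MvPolynomial (Fin 8) ℂ :=
  ((Real.sqrt 2 : ℂ) / 3) •
    (sgl 0 1 * sgl 2 3 + epsilon • (sgl 0 2 * sgl 3 1) + epsilon ^ 2 • (sgl 0 3 * sgl 1 2))

/-- `r = (√2/3)(s₁₂s₃₄ + ε²·s₁₃s₄₂ + ε·s₁₄s₂₃)`. -/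
noncomputable def singletR : MvPolynomial (Fin 8) ℂ :=
  ((Real.sqrt 2 : ℂ) / 3) •
    (sgl 0 1 * sgl 2 3 + epsilon ^ 2 • (sgl 0 2 * sgl 3 1) + epsilon • (sgl 0 3 * sgl 1 2))

-- ======================= auxiliary machinery =======================

lemma fischer_sum {d N : ℕ} (M : Fin N → (Fin d →₀ ℕ)) (Z : Fin N → ℂ)
    (hM : Function.Injective M) :
    fischerNormSq (∑ i, monomial (M i) (Z i)) =
      ∑ i, Complex.normSq (Z i) * ((M i).prod fun _ m => (m.factorial : ℝ)) := by
  have hcoeff : ∀ j, coeff (M j) (∑ i, monomial (M i) (Z i)) = Z j := by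
    intro j
    rw [coeff_sum, Finset.sum_eq_single j]
    · simp [coeff_monomial]
    · intro i _ hij
      rw [coeff_monomial, if_neg (fun h => hij (hM h))]
    · simp
  have hsupp : (∑ i, monomial (M i) (Z i)).support ⊆ Finset.univ.image M := by
    intro α hα
    rw [mem_support_iff, coeff_sum] at hα
    by_contra hc
    apply hα
    apply Finset.sum_eq_zero
    intro i _
    rw [coeff_monomial, if_neg]
    intro h
    exact hc (Finset.mem_image.mpr ⟨i, Finset.mem_univ i, h⟩)
  rw [fischerNormSq,
    Finset.sum_subset hsupp (by
      intro x _ hx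
      rw [notMem_support_iff.mp hx]
      simp),
    Finset.sum_image (fun i _ j _ h => hM h)]
  exact Finset.sum_congr rfl fun i _ => by rw [hcoeff]

lemma fprod {d : ℕ} (e : Fin d → ℕ) :
    ((Finsupp.equivFunOnFinite.symm e).prod fun _ m => (m.factorial : ℝ)) =
      ∏ i, ((e i).factorial : ℝ) := by
  rw [Finsupp.prod_fintype]
  · simp
  · intro i; simp

lemma mono8 (z : ℂ) (e : Fin 8 → ℕ) :
    monomial (Finsupp.equivFunOnFinite.symm e) z
      = C z * (X 0 ^ e 0 * X 1 ^ e 1 * X 2 ^ e 2 * X 3 ^ e 3 * X 4 ^ e 4 * X 5 ^ e 5 *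
          X 6 ^ e 6 * X 7 ^ e 7) := by
  rw [monomial_eq, Finsupp.prod_fintype]
  · simp [Fin.prod_univ_eight, mul_assoc]
  · intro i; exact pow_zero _

lemma cv80 {α : Type*} (a0 a1 a2 a3 a4 a5 a6 a7 : α) : ![a0,a1,a2,a3,a4,a5,a6,a7] (0 : Fin 8) = a0 := rfl
lemma cv81 {α : Type*} (a0 a1 a2 a3 a4 a5 a6 a7 : α) : ![a0,a1,a2,a3,a4,a5,a6,a7] (1 : Fin 8) = a1 := rfl
lemma cv82 {α : Type*} (a0 a1 a2 a3 a4 a5 a6 a7 : α) : ![a0,a1,a2,a3,a4,a5,a6,a7] (2 : Fin 8) = a2 := rfl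
lemma cv83 {α : Type*} (a0 a1 a2 a3 a4 a5 a6 a7 : α) : ![a0,a1,a2,a3,a4,a5,a6,a7] (3 : Fin 8) = a3 := rfl
lemma cv84 {α : Type*} (a0 a1 a2 a3 a4 a5 a6 a7 : α) : ![a0,a1,a2,a3,a4,a5,a6,a7] (4 : Fin 8) = a4 := rfl
lemma cv85 {α : Type*} (a0 a1 a2 a3 a4 a5 a6 a7 : α) : ![a0,a1,a2,a3,a4,a5,a6,a7] (5 : Fin 8) = a5 := rfl
lemma cv86 {α : Type*} (a0 a1 a2 a3 a4 a5 a6 a7 : α) : ![a0,a1,a2,a3,a4,a5,a6,a7] (6 : Fin 8) = a6 := rfl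
lemma cv87 {α : Type*} (a0 a1 a2 a3 a4 a5 a6 a7 : α) : ![a0,a1,a2,a3,a4,a5,a6,a7] (7 : Fin 8) = a7 := rfl

lemma cvm2 {α : Type*} (a0 a1 a2 a3 a4 a5 a6 a7 a8 a9 a10 a11 a12 a13 a14 a15 a16 a17 a18 : α) (h : 2 < 19) : ![a0,a1,a2,a3,a4,a5,a6,a7,a8,a9,a10,a11,a12,a13,a14,a15,a16,a17,a18] (⟨2, h⟩ : Fin 19) = a2 := rfl
lemma cvm3 {α : Type*} (a0 a1 a2 a3 a4 a5 a6 a7 a8 a9 a10 a11 a12 a13 a14 a15 a16 a17 a18 : α) (h : 3 < 19) : ![a0,a1,a2,a3,a4,a5,a6,a7,a8,a9,a10,a11,a12,a13,a14,a15,a16,a17,a18] (⟨3, h⟩ : Fin 19) = a3 := rfl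
lemma cvm4 {α : Type*} (a0 a1 a2 a3 a4 a5 a6 a7 a8 a9 a10 a11 a12 a13 a14 a15 a16 a17 a18 : α) (h : 4 < 19) : ![a0,a1,a2,a3,a4,a5,a6,a7,a8,a9,a10,a11,a12,a13,a14,a15,a16,a17,a18] (⟨4, h⟩ : Fin 19) = a4 := rfl
lemma cvm5 {α : Type*} (a0 a1 a2 a3 a4 a5 a6 a7 a8 a9 a10 a11 a12 a13 a14 a15 a16 a17 a18 : α) (h : 5 < 19) : ![a0,a1,a2,a3,a4,a5,a6,a7,a8,a9,a10,a11,a12,a13,a14,a15,a16,a17,a18] (⟨5, h⟩ : Fin 19) = a5 := rfl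
lemma cvm6 {α : Type*} (a0 a1 a2 a3 a4 a5 a6 a7 a8 a9 a10 a11 a12 a13 a14 a15 a16 a17 a18 : α) (h : 6 < 19) : ![a0,a1,a2,a3,a4,a5,a6,a7,a8,a9,a10,a11,a12,a13,a14,a15,a16,a17,a18] (⟨6, h⟩ : Fin 19) = a6 := rfl
lemma cvm7 {α : Type*} (a0 a1 a2 a3 a4 a5 a6 a7 a8 a9 a10 a11 a12 a13 a14 a15 a16 a17 a18 : α) (h : 7 < 19) : ![a0,a1,a2,a3,a4,a5,a6,a7,a8,a9,a10,a11,a12,a13,a14,a15,a16,a17,a18] (⟨7, h⟩ : Fin 19) = a7 := rfl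
lemma cvm8 {α : Type*} (a0 a1 a2 a3 a4 a5 a6 a7 a8 a9 a10 a11 a12 a13 a14 a15 a16 a17 a18 : α) (h : 8 < 19) : ![a0,a1,a2,a3,a4,a5,a6,a7,a8,a9,a10,a11,a12,a13,a14,a15,a16,a17,a18] (⟨8, h⟩ : Fin 19) = a8 := rfl
lemma cvm9 {α : Type*} (a0 a1 a2 a3 a4 a5 a6 a7 a8 a9 a10 a11 a12 a13 a14 a15 a16 a17 a18 : α) (h : 9 < 19) : ![a0,a1,a2,a3,a4,a5,a6,a7,a8,a9,a10,a11,a12,a13,a14,a15,a16,a17,a18] (⟨9, h⟩ : Fin 19) = a9 := rfl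
lemma cvm10 {α : Type*} (a0 a1 a2 a3 a4 a5 a6 a7 a8 a9 a10 a11 a12 a13 a14 a15 a16 a17 a18 : α) (h : 10 < 19) : ![a0,a1,a2,a3,a4,a5,a6,a7,a8,a9,a10,a11,a12,a13,a14,a15,a16,a17,a18] (⟨10, h⟩ : Fin 19) = a10 := rfl
lemma cvm11 {α : Type*} (a0 a1 a2 a3 a4 a5 a6 a7 a8 a9 a10 a11 a12 a13 a14 a15 a16 a17 a18 : α) (h : 11 < 19) : ![a0,a1,a2,a3,a4,a5,a6,a7,a8,a9,a10,a11,a12,a13,a14,a15,a16,a17,a18] (⟨11, h⟩ : Fin 19) = a11 := rfl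
lemma cvm12 {α : Type*} (a0 a1 a2 a3 a4 a5 a6 a7 a8 a9 a10 a11 a12 a13 a14 a15 a16 a17 a18 : α) (h : 12 < 19) : ![a0,a1,a2,a3,a4,a5,a6,a7,a8,a9,a10,a11,a12,a13,a14,a15,a16,a17,a18] (⟨12, h⟩ : Fin 19) = a12 := rfl
lemma cvm13 {α : Type*} (a0 a1 a2 a3 a4 a5 a6 a7 a8 a9 a10 a11 a12 a13 a14 a15 a16 a17 a18 : α) (h : 13 < 19) : ![a0,a1,a2,a3,a4,a5,a6,a7,a8,a9,a10,a11,a12,a13,a14,a15,a16,a17,a18] (⟨13, h⟩ : Fin 19) = a13 := rfl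
lemma cvm14 {α : Type*} (a0 a1 a2 a3 a4 a5 a6 a7 a8 a9 a10 a11 a12 a13 a14 a15 a16 a17 a18 : α) (h : 14 < 19) : ![a0,a1,a2,a3,a4,a5,a6,a7,a8,a9,a10,a11,a12,a13,a14,a15,a16,a17,a18] (⟨14, h⟩ : Fin 19) = a14 := rfl
lemma cvm15 {α : Type*} (a0 a1 a2 a3 a4 a5 a6 a7 a8 a9 a10 a11 a12 a13 a14 a15 a16 a17 a18 : α) (h : 15 < 19) : ![a0,a1,a2,a3,a4,a5,a6,a7,a8,a9,a10,a11,a12,a13,a14,a15,a16,a17,a18] (⟨15, h⟩ : Fin 19) = a15 := rfl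
lemma cvm16 {α : Type*} (a0 a1 a2 a3 a4 a5 a6 a7 a8 a9 a10 a11 a12 a13 a14 a15 a16 a17 a18 : α) (h : 16 < 19) : ![a0,a1,a2,a3,a4,a5,a6,a7,a8,a9,a10,a11,a12,a13,a14,a15,a16,a17,a18] (⟨16, h⟩ : Fin 19) = a16 := rfl
lemma cvm17 {α : Type*} (a0 a1 a2 a3 a4 a5 a6 a7 a8 a9 a10 a11 a12 a13 a14 a15 a16 a17 a18 : α) (h : 17 < 19) : ![a0,a1,a2,a3,a4,a5,a6,a7,a8,a9,a10,a11,a12,a13,a14,a15,a16,a17,a18] (⟨17, h⟩ : Fin 19) = a17 := rfl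
lemma cvm18 {α : Type*} (a0 a1 a2 a3 a4 a5 a6 a7 a8 a9 a10 a11 a12 a13 a14 a15 a16 a17 a18 : α) (h : 18 < 19) : ![a0,a1,a2,a3,a4,a5,a6,a7,a8,a9,a10,a11,a12,a13,a14,a15,a16,a17,a18] (⟨18, h⟩ : Fin 19) = a18 := rfl

set_option maxHeartbeats 1000000 in
lemma sum19 {M : Type*} [AddCommMonoid M] (g : Fin 19 → M) : ∑ i, g i
    = g 0 + (g 1 + (g ⟨2, by omega⟩ + (g ⟨3, by omega⟩ + (g ⟨4, by omega⟩ + (g ⟨5, by omega⟩ +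
      (g ⟨6, by omega⟩ + (g ⟨7, by omega⟩ + (g ⟨8, by omega⟩ + (g ⟨9, by omega⟩ + (g ⟨10, by omega⟩ +
      (g ⟨11, by omega⟩ + (g ⟨12, by omega⟩ + (g ⟨13, by omega⟩ + (g ⟨14, by omega⟩ + (g ⟨15, by omega⟩ +
      (g ⟨16, by omega⟩ + (g ⟨17, by omega⟩ + g ⟨18, by omega⟩))))))))))))))))) := by
  simp only [Fin.sum_univ_succ, Fin.sum_univ_zero, add_zero]
  norm_num [Fin.succ, Fin.add_def]

lemma ica0 : (Fin.castAdd 4 (0 : Fin 4)) = (0 : Fin 8) := by decide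
lemma ica1 : (Fin.castAdd 4 (1 : Fin 4)) = (1 : Fin 8) := by decide
lemma ica2 : (Fin.castAdd 4 (2 : Fin 4)) = (2 : Fin 8) := by decide
lemma ica3 : (Fin.castAdd 4 (3 : Fin 4)) = (3 : Fin 8) := by decide
lemma ina0 : (Fin.natAdd 4 (0 : Fin 4)) = (4 : Fin 8) := by decide
lemma ina1 : (Fin.natAdd 4 (1 : Fin 4)) = (5 : Fin 8) := by decide
lemma ina2 : (Fin.natAdd 4 (2 : Fin 4)) = (6 : Fin 8) := by decide
lemma ina3 : (Fin.natAdd 4 (3 : Fin 4)) = (7 : Fin 8) := by decide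

lemma eps_cube : epsilon ^ 3 = 1 := by
  rw [epsilon, ← Complex.exp_nat_mul,
    show (3:ℕ) * (2 * (Real.pi:ℂ) * Complex.I / 3) = 2*Real.pi*Complex.I by push_cast; ring,
    Complex.exp_two_pi_mul_I]

lemma eps_ne_one : epsilon ≠ 1 := by
  intro h
  have h1 : epsilon.im = Real.sin (2 * Real.pi / 3) := by
    rw [epsilon, show 2 * (Real.pi:ℂ) * Complex.I / 3 = ((2 * Real.pi / 3 : ℝ):ℂ) * Complex.I by push_cast; ring,
      Complex.exp_ofReal_mul_I_im]
  have h2 : Real.sin (2 * Real.pi / 3) > 0 := by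
    apply Real.sin_pos_of_pos_of_lt_pi
    · positivity
    · nlinarith [Real.pi_pos]
  rw [h] at h1
  simp at h1
  linarith [h1 ▸ h2]

lemma eps_rel : epsilon ^ 2 + epsilon + 1 = 0 := by
  have h : (epsilon - 1) * (epsilon ^ 2 + epsilon + 1) = 0 := by
    linear_combination eps_cube
  rcases mul_eq_zero.mp h with h | h
  · exact absurd (sub_eq_zero.mp h) eps_ne_one
  · exact h

lemma eps_conj : (starRingEnd ℂ) epsilon = -1 - epsilon := by
  have h0 : epsilon ≠ 0 := by
    intro h; have := eps_cube; rw [h] at this; simp at this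
  have habs : epsilon * (starRingEnd ℂ) epsilon = 1 := by
    rw [Complex.mul_conj]
    norm_cast
    rw [epsilon, Complex.normSq_eq_norm_sq, Complex.norm_exp]
    norm_num [Complex.div_re, Complex.normSq]
  have h2 : epsilon * (epsilon ^ 2) = 1 := by linear_combination eps_cube
  have h3 := mul_left_cancel₀ h0 (habs.trans h2.symm)
  rw [h3]
  linear_combination eps_rel

/-- Exponent table of the 19 monomials in the support. -/
def Vt : Fin 19 → Fin 8 → ℕ :=
  ![![0,0,2,2,2,2,0,0],
    ![0,1,1,2,2,1,1,0],
    ![0,1,2,1,2,1,0,1],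
    ![0,2,0,2,2,0,2,0],
    ![0,2,1,1,2,0,1,1],
    ![0,2,2,0,2,0,0,2],
    ![1,0,1,2,1,2,1,0],
    ![1,0,2,1,1,2,0,1],
    ![1,1,0,2,1,1,2,0],
    ![1,1,1,1,1,1,1,1],
    ![1,1,2,0,1,1,0,2],
    ![1,2,0,1,1,0,2,1],
    ![1,2,1,0,1,0,1,2],
    ![2,0,0,2,0,2,2,0],
    ![2,0,1,1,0,2,1,1],
    ![2,0,2,0,0,2,0,2],
    ![2,1,0,1,0,1,2,1],
    ![2,1,1,0,0,1,1,2],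
    ![2,2,0,0,0,0,2,2]]

noncomputable def Mt : Fin 19 → (Fin 8 →₀ ℕ) := fun i => Finsupp.equivFunOnFinite.symm (Vt i)

lemma Vt_inj : Function.Injective Vt := by decide

lemma Mt_inj : Function.Injective Mt :=
  fun i j h => Vt_inj (Finsupp.equivFunOnFinite.symm.injective h)

set_option maxHeartbeats 2000000 in
/-- Coefficient table of `(c·l + s·r)²`. -/
noncomputable def Zt (c s : ℂ) : Fin 19 → ℂ :=
  ![(18:ℂ)⁻¹ * (c^2 * ((1:ℂ)*epsilon^2 + (-2:ℂ)*epsilon^3 + (1:ℂ)*epsilon^4) + 2*(c*s) * ((-1:ℂ)*epsilon^2 + (2:ℂ)*epsilon^3 + (-1:ℂ)*epsilon^4) + s^2 * ((1:ℂ)*epsilon^2 + (-2:ℂ)*epsilon^3 + (1:ℂ)*epsilon^4)),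
    (18:ℂ)⁻¹ * (c^2 * ((-2:ℂ)*epsilon + (2:ℂ)*epsilon^2 + (2:ℂ)*epsilon^3 + (-2:ℂ)*epsilon^4) + 2*(c*s) * ((1:ℂ)*epsilon^2 + (-2:ℂ)*epsilon^3 + (1:ℂ)*epsilon^4) + s^2 * ((2:ℂ)*epsilon + (-4:ℂ)*epsilon^2 + (2:ℂ)*epsilon^3)),
    (18:ℂ)⁻¹ * (c^2 * ((2:ℂ)*epsilon + (-4:ℂ)*epsilon^2 + (2:ℂ)*epsilon^3) + 2*(c*s) * ((1:ℂ)*epsilon^2 + (-2:ℂ)*epsilon^3 + (1:ℂ)*epsilon^4) + s^2 * ((-2:ℂ)*epsilon + (2:ℂ)*epsilon^2 + (2:ℂ)*epsilon^3 + (-2:ℂ)*epsilon^4)),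
    (18:ℂ)⁻¹ * (c^2 * ((1:ℂ) + (-2:ℂ)*epsilon^2 + (1:ℂ)*epsilon^4) + 2*(c*s) * ((1:ℂ) + (-1:ℂ)*epsilon + (-1:ℂ)*epsilon^2 + (1:ℂ)*epsilon^3) + s^2 * ((1:ℂ) + (-2:ℂ)*epsilon + (1:ℂ)*epsilon^2)),
    (18:ℂ)⁻¹ * (c^2 * ((-2:ℂ) + (2:ℂ)*epsilon + (2:ℂ)*epsilon^2 + (-2:ℂ)*epsilon^3) + 2*(c*s) * ((-2:ℂ) + (2:ℂ)*epsilon + (1:ℂ)*epsilon^2 + (-1:ℂ)*epsilon^4) + s^2 * ((-2:ℂ) + (2:ℂ)*epsilon + (2:ℂ)*epsilon^2 + (-2:ℂ)*epsilon^3)),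
    (18:ℂ)⁻¹ * (c^2 * ((1:ℂ) + (-2:ℂ)*epsilon + (1:ℂ)*epsilon^2) + 2*(c*s) * ((1:ℂ) + (-1:ℂ)*epsilon + (-1:ℂ)*epsilon^2 + (1:ℂ)*epsilon^3) + s^2 * ((1:ℂ) + (-2:ℂ)*epsilon^2 + (1:ℂ)*epsilon^4)),
    (18:ℂ)⁻¹ * (c^2 * ((2:ℂ)*epsilon + (-4:ℂ)*epsilon^2 + (2:ℂ)*epsilon^3) + 2*(c*s) * ((1:ℂ)*epsilon^2 + (-2:ℂ)*epsilon^3 + (1:ℂ)*epsilon^4) + s^2 * ((-2:ℂ)*epsilon + (2:ℂ)*epsilon^2 + (2:ℂ)*epsilon^3 + (-2:ℂ)*epsilon^4)),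
    (18:ℂ)⁻¹ * (c^2 * ((-2:ℂ)*epsilon + (2:ℂ)*epsilon^2 + (2:ℂ)*epsilon^3 + (-2:ℂ)*epsilon^4) + 2*(c*s) * ((1:ℂ)*epsilon^2 + (-2:ℂ)*epsilon^3 + (1:ℂ)*epsilon^4) + s^2 * ((2:ℂ)*epsilon + (-4:ℂ)*epsilon^2 + (2:ℂ)*epsilon^3)),
    (18:ℂ)⁻¹ * (c^2 * ((-2:ℂ) + (2:ℂ)*epsilon + (2:ℂ)*epsilon^2 + (-2:ℂ)*epsilon^3) + 2*(c*s) * ((-2:ℂ) + (2:ℂ)*epsilon + (1:ℂ)*epsilon^2 + (-1:ℂ)*epsilon^4) + s^2 * ((-2:ℂ) + (2:ℂ)*epsilon + (2:ℂ)*epsilon^2 + (-2:ℂ)*epsilon^3)),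
    (18:ℂ)⁻¹ * (c^2 * ((4:ℂ) + (-4:ℂ)*epsilon + (-4:ℂ)*epsilon^3 + (4:ℂ)*epsilon^4) + 2*(c*s) * ((4:ℂ) + (-4:ℂ)*epsilon + (-6:ℂ)*epsilon^2 + (8:ℂ)*epsilon^3 + (-2:ℂ)*epsilon^4) + s^2 * ((4:ℂ) + (-4:ℂ)*epsilon + (-4:ℂ)*epsilon^3 + (4:ℂ)*epsilon^4)),
    (18:ℂ)⁻¹ * (c^2 * ((-2:ℂ) + (2:ℂ)*epsilon + (2:ℂ)*epsilon^2 + (-2:ℂ)*epsilon^3) + 2*(c*s) * ((-2:ℂ) + (2:ℂ)*epsilon + (1:ℂ)*epsilon^2 + (-1:ℂ)*epsilon^4) + s^2 * ((-2:ℂ) + (2:ℂ)*epsilon + (2:ℂ)*epsilon^2 + (-2:ℂ)*epsilon^3)),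
    (18:ℂ)⁻¹ * (c^2 * ((-2:ℂ)*epsilon + (2:ℂ)*epsilon^2 + (2:ℂ)*epsilon^3 + (-2:ℂ)*epsilon^4) + 2*(c*s) * ((1:ℂ)*epsilon^2 + (-2:ℂ)*epsilon^3 + (1:ℂ)*epsilon^4) + s^2 * ((2:ℂ)*epsilon + (-4:ℂ)*epsilon^2 + (2:ℂ)*epsilon^3)),
    (18:ℂ)⁻¹ * (c^2 * ((2:ℂ)*epsilon + (-4:ℂ)*epsilon^2 + (2:ℂ)*epsilon^3) + 2*(c*s) * ((1:ℂ)*epsilon^2 + (-2:ℂ)*epsilon^3 + (1:ℂ)*epsilon^4) + s^2 * ((-2:ℂ)*epsilon + (2:ℂ)*epsilon^2 + (2:ℂ)*epsilon^3 + (-2:ℂ)*epsilon^4)),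
    (18:ℂ)⁻¹ * (c^2 * ((1:ℂ) + (-2:ℂ)*epsilon + (1:ℂ)*epsilon^2) + 2*(c*s) * ((1:ℂ) + (-1:ℂ)*epsilon + (-1:ℂ)*epsilon^2 + (1:ℂ)*epsilon^3) + s^2 * ((1:ℂ) + (-2:ℂ)*epsilon^2 + (1:ℂ)*epsilon^4)),
    (18:ℂ)⁻¹ * (c^2 * ((-2:ℂ) + (2:ℂ)*epsilon + (2:ℂ)*epsilon^2 + (-2:ℂ)*epsilon^3) + 2*(c*s) * ((-2:ℂ) + (2:ℂ)*epsilon + (1:ℂ)*epsilon^2 + (-1:ℂ)*epsilon^4) + s^2 * ((-2:ℂ) + (2:ℂ)*epsilon + (2:ℂ)*epsilon^2 + (-2:ℂ)*epsilon^3)),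
    (18:ℂ)⁻¹ * (c^2 * ((1:ℂ) + (-2:ℂ)*epsilon^2 + (1:ℂ)*epsilon^4) + 2*(c*s) * ((1:ℂ) + (-1:ℂ)*epsilon + (-1:ℂ)*epsilon^2 + (1:ℂ)*epsilon^3) + s^2 * ((1:ℂ) + (-2:ℂ)*epsilon + (1:ℂ)*epsilon^2)),
    (18:ℂ)⁻¹ * (c^2 * ((2:ℂ)*epsilon + (-4:ℂ)*epsilon^2 + (2:ℂ)*epsilon^3) + 2*(c*s) * ((1:ℂ)*epsilon^2 + (-2:ℂ)*epsilon^3 + (1:ℂ)*epsilon^4) + s^2 * ((-2:ℂ)*epsilon + (2:ℂ)*epsilon^2 + (2:ℂ)*epsilon^3 + (-2:ℂ)*epsilon^4)),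
    (18:ℂ)⁻¹ * (c^2 * ((-2:ℂ)*epsilon + (2:ℂ)*epsilon^2 + (2:ℂ)*epsilon^3 + (-2:ℂ)*epsilon^4) + 2*(c*s) * ((1:ℂ)*epsilon^2 + (-2:ℂ)*epsilon^3 + (1:ℂ)*epsilon^4) + s^2 * ((2:ℂ)*epsilon + (-4:ℂ)*epsilon^2 + (2:ℂ)*epsilon^3)),
    (18:ℂ)⁻¹ * (c^2 * ((1:ℂ)*epsilon^2 + (-2:ℂ)*epsilon^3 + (1:ℂ)*epsilon^4) + 2*(c*s) * ((-1:ℂ)*epsilon^2 + (2:ℂ)*epsilon^3 + (-1:ℂ)*epsilon^4) + s^2 * ((1:ℂ)*epsilon^2 + (-2:ℂ)*epsilon^3 + (1:ℂ)*epsilon^4))]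

lemma hkP : (C ((Real.sqrt 2 : ℂ)/3) : MvPolynomial (Fin 8) ℂ)^2 * (C (((Real.sqrt 2 : ℂ))⁻¹))^4
    = C ((18:ℂ)⁻¹) := by
  rw [← map_pow, ← map_pow, ← map_mul]
  congr 1
  have h2 : ((Real.sqrt 2 : ℂ))^2 = 2 := by
    norm_cast
    rw [Real.sq_sqrt]; norm_num
  have h0 : (Real.sqrt 2 : ℂ) ≠ 0 := by
    intro h; rw [h] at h2; norm_num at h2
  have h4 : ((Real.sqrt 2:ℂ))^4 = 4 := by
    linear_combination (((Real.sqrt 2:ℂ))^2 + 2) * h2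
  rw [div_pow, inv_pow, h4, h2]
  norm_num

set_option maxHeartbeats 4000000 in
set_option maxRecDepth 100000 in
lemma key (c s : ℂ) :
    (c • singletL + s • singletR)^2 = ∑ i, monomial (Mt i) (Zt c s i) := by
  rw [sum19]
  simp (config := { maxSteps := 10000000 }) only [Mt, Zt, Vt, Matrix.cons_val_zero,
    Matrix.cons_val_one, Matrix.head_cons,
    cvm2, cvm3, cvm4, cvm5, cvm6, cvm7, cvm8, cvm9, cvm10, cvm11, cvm12, cvm13, cvm14,
    cvm15, cvm16, cvm17, cvm18,
    mono8, cv80, cv81, cv82, cv83, cv84, cv85, cv86, cv87,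
    singletL, singletR, sgl, ica0, ica1, ica2, ica3, ina0, ina1, ina2, ina3,
    smul_eq_C_mul, map_mul, map_add, map_sub, map_pow, map_neg, map_ofNat, map_one]
  linear_combination ((C c * ((X 0*X 5 - X 1*X 4) * (X 2*X 7 - X 3*X 6)
      + C epsilon * ((X 0*X 6 - X 2*X 4) * (X 3*X 5 - X 1*X 7))
      + C epsilon^2 * ((X 0*X 7 - X 3*X 4) * (X 1*X 6 - X 2*X 5)))
   + C s * ((X 0*X 5 - X 1*X 4) * (X 2*X 7 - X 3*X 6)
      + C epsilon^2 * ((X 0*X 6 - X 2*X 4) * (X 3*X 5 - X 1*X 7))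
      + C epsilon * ((X 0*X 7 - X 3*X 4) * (X 1*X 6 - X 2*X 5))))^2) * hkP

set_option maxHeartbeats 4000000 in
set_option maxRecDepth 100000 in
theorem second_moment_singlet' (θ φ : ℝ)
    (f : MvPolynomial (Fin 8) ℂ)
    (hf : f = (Real.cos (θ / 2) : ℂ) • singletL +
        ((Real.sin (θ / 2) : ℂ) * Complex.exp (Complex.I * (φ : ℂ))) • singletR) :
    fischerNormSq (f ^ 2) = 17 / 2 - (1 / 2) * Real.cos (2 * θ) := by
  have hX : Complex.exp (Complex.I * (φ:ℂ)) * (starRingEnd ℂ) (Complex.exp (Complex.I * (φ:ℂ))) = 1 := by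
    rw [Complex.mul_conj]
    norm_cast
    rw [Complex.normSq_eq_norm_sq, Complex.norm_exp]
    norm_num
  have hC : ((Real.cos (θ / 2) : ℂ))^2 + ((Real.sin (θ / 2) : ℂ))^2 = 1 := by
    rw [show ((Real.cos (θ/2):ℂ))^2 + ((Real.sin (θ/2):ℂ))^2
        = ((Real.cos (θ/2)^2 + Real.sin (θ/2)^2 : ℝ) : ℂ) by push_cast; ring,
      Real.cos_sq_add_sin_sq]
    norm_num
  rw [hf, key, fischer_sum Mt _ Mt_inj,
    show Real.cos (2*θ) = 2*(2*Real.cos (θ/2)^2 - 1)^2 - 1 by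
      rw [Real.cos_two_mul, show θ = 2*(θ/2) by ring, Real.cos_two_mul]; ring_nf]
  rw [sum19]
  simp (config := { maxSteps := 10000000 }) only [Mt, Zt, Vt, Matrix.cons_val_zero,
    Matrix.cons_val_one, Matrix.head_cons,
    cvm2, cvm3, cvm4, cvm5, cvm6, cvm7, cvm8, cvm9, cvm10, cvm11, cvm12, cvm13, cvm14,
    cvm15, cvm16, cvm17, cvm18,
    fprod, Fin.prod_univ_eight,
    cv80, cv81, cv82, cv83, cv84, cv85, cv86, cv87,
    Nat.factorial_two, Nat.factorial_one, Nat.factorial_zero, Nat.cast_ofNat, Nat.cast_one]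
  rw [← Complex.ofReal_inj]
  push_cast [← Complex.mul_conj, -Complex.ofReal_sin, -Complex.ofReal_cos]
  simp only [map_add, map_sub, map_mul, map_pow, map_inv₀, map_ofNat, map_one, map_neg,
    Complex.conj_ofReal, eps_conj]
  linear_combination ((-200/27:ℂ)*((Real.sin (θ / 2) : ℂ))^4*(Complex.exp (Complex.I * (φ : ℂ)))^2*((starRingEnd ℂ) (Complex.exp (Complex.I * (φ : ℂ))))^2 + (152/27:ℂ)*((Real.sin (θ / 2) : ℂ))^4*(Complex.exp (Complex.I * (φ : ℂ)))^2*((starRingEnd ℂ) (Complex.exp (Complex.I * (φ : ℂ))))^2*epsilon + (28/9:ℂ)*((Real.sin (θ / 2) : ℂ))^4*(Complex.exp (Complex.I * (φ : ℂ)))^2*((starRingEnd ℂ) (Complex.exp (Complex.I * (φ : ℂ))))^2*epsilon^2 + (-124/27:ℂ)*((Real.sin (θ / 2) : ℂ))^4*(Complex.exp (Complex.I * (φ : ℂ)))^2*((starRingEnd ℂ) (Complex.exp (Complex.I * (φ : ℂ))))^2*epsilon^3 + (-32/27:ℂ)*((Real.sin (θ / 2) : ℂ))^4*(Complex.exp (Complex.I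 * (φ : ℂ)))^2*((starRingEnd ℂ) (Complex.exp (Complex.I * (φ : ℂ))))^2*epsilon^4 + (4/3:ℂ)*((Real.sin (θ / 2) : ℂ))^4*(Complex.exp (Complex.I * (φ : ℂ)))^2*((starRingEnd ℂ) (Complex.exp (Complex.I * (φ : ℂ))))^2*epsilon^5 + (4/9:ℂ)*((Real.sin (θ / 2) : ℂ))^4*(Complex.exp (Complex.I * (φ : ℂ)))^2*((starRingEnd ℂ) (Complex.exp (Complex.I * (φ : ℂ))))^2*epsilon^6 + (32/27:ℂ)*((Real.cos (θ / 2) : ℂ))*((Real.sin (θ / 2) : ℂ))^3*(Complex.exp (Complex.I * (φ : ℂ)))*((starRingEnd ℂ) (Complex.exp (Complex.I * (φ : ℂ))))^2 + (-64/27:ℂ)*((Real.cos (θ / 2) : ℂ))*((Real.sin (θ / 2) : ℂ))^3*(Complex.exp (Complex.I * (φ : ℂ)))*((starRingEnd ℂ) (Complex.exp (Complex.I * (φ : ℂ))))^2*epsilon + (-40/27:ℂ)*((Real.cos (θ / 2) : ℂ))*((Real.sin (θ / 2) : ℂ))^3*(Complex.exp (Complex.I * (φ : ℂ)))*((starRingEnd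 ℂ) (Complex.exp (Complex.I * (φ : ℂ))))^2*epsilon^2 + (88/27:ℂ)*((Real.cos (θ / 2) : ℂ))*((Real.sin (θ / 2) : ℂ))^3*(Complex.exp (Complex.I * (φ : ℂ)))*((starRingEnd ℂ) (Complex.exp (Complex.I * (φ : ℂ))))^2*epsilon^3 + (28/27:ℂ)*((Real.cos (θ / 2) : ℂ))*((Real.sin (θ / 2) : ℂ))^3*(Complex.exp (Complex.I * (φ : ℂ)))*((starRingEnd ℂ) (Complex.exp (Complex.I * (φ : ℂ))))^2*epsilon^4 + (-32/27:ℂ)*((Real.cos (θ / 2) : ℂ))*((Real.sin (θ / 2) : ℂ))^3*(Complex.exp (Complex.I * (φ : ℂ)))*((starRingEnd ℂ) (Complex.exp (Complex.I * (φ : ℂ))))^2*epsilon^5 + (-4/9:ℂ)*((Real.cos (θ / 2) : ℂ))*((Real.sin (θ / 2) : ℂ))^3*(Complex.exp (Complex.I * (φ : ℂ)))*((starRingEnd ℂ) (Complex.exp (Complex.I * (φ : ℂ))))^2*epsilon^6 + (16/27:ℂ)*((Real.cos (θ / 2) : ℂ))*((Real.sin (θ / 2) : ℂ))^3*(Complex.exp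 (Complex.I * (φ : ℂ)))^2*((starRingEnd ℂ) (Complex.exp (Complex.I * (φ : ℂ)))) + (-80/27:ℂ)*((Real.cos (θ / 2) : ℂ))*((Real.sin (θ / 2) : ℂ))^3*(Complex.exp (Complex.I * (φ : ℂ)))^2*((starRingEnd ℂ) (Complex.exp (Complex.I * (φ : ℂ))))*epsilon + (4/27:ℂ)*((Real.cos (θ / 2) : ℂ))*((Real.sin (θ / 2) : ℂ))^3*(Complex.exp (Complex.I * (φ : ℂ)))^2*((starRingEnd ℂ) (Complex.exp (Complex.I * (φ : ℂ))))*epsilon^2 + (104/27:ℂ)*((Real.cos (θ / 2) : ℂ))*((Real.sin (θ / 2) : ℂ))^3*(Complex.exp (Complex.I * (φ : ℂ)))^2*((starRingEnd ℂ) (Complex.exp (Complex.I * (φ : ℂ))))*epsilon^3 + (8/27:ℂ)*((Real.cos (θ / 2) : ℂ))*((Real.sin (θ / 2) : ℂ))^3*(Complex.exp (Complex.I * (φ : ℂ)))^2*((starRingEnd ℂ) (Complex.exp (Complex.I * (φ : ℂ))))*epsilon^4 + (-40/27:ℂ)*((Real.cos (θ / 2) : ℂ))*((Real.sin (θ / 2)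 : ℂ))^3*(Complex.exp (Complex.I * (φ : ℂ)))^2*((starRingEnd ℂ) (Complex.exp (Complex.I * (φ : ℂ))))*epsilon^5 + (-4/9:ℂ)*((Real.cos (θ / 2) : ℂ))*((Real.sin (θ / 2) : ℂ))^3*(Complex.exp (Complex.I * (φ : ℂ)))^2*((starRingEnd ℂ) (Complex.exp (Complex.I * (φ : ℂ))))*epsilon^6 + (16/27:ℂ)*((Real.cos (θ / 2) : ℂ))^2*((Real.sin (θ / 2) : ℂ))^2*((starRingEnd ℂ) (Complex.exp (Complex.I * (φ : ℂ))))^2 + (-4/9:ℂ)*((Real.cos (θ / 2) : ℂ))^2*((Real.sin (θ / 2) : ℂ))^2*((starRingEnd ℂ) (Complex.exp (Complex.I * (φ : ℂ))))^2*epsilon^2 + (-20/27:ℂ)*((Real.cos (θ / 2) : ℂ))^2*((Real.sin (θ / 2) : ℂ))^2*((starRingEnd ℂ) (Complex.exp (Complex.I * (φ : ℂ))))^2*epsilon^3 + (4/9:ℂ)*((Real.cos (θ / 2) : ℂ))^2*((Real.sin (θ / 2) : ℂ))^2*((starRingEnd ℂ) (Complex.exp (Complex.I * (φ : ℂ))))^2*epsilon^5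 + (4/27:ℂ)*((Real.cos (θ / 2) : ℂ))^2*((Real.sin (θ / 2) : ℂ))^2*((starRingEnd ℂ) (Complex.exp (Complex.I * (φ : ℂ))))^2*epsilon^6 + (-508/27:ℂ)*((Real.cos (θ / 2) : ℂ))^2*((Real.sin (θ / 2) : ℂ))^2*(Complex.exp (Complex.I * (φ : ℂ)))*((starRingEnd ℂ) (Complex.exp (Complex.I * (φ : ℂ)))) + (380/27:ℂ)*((Real.cos (θ / 2) : ℂ))^2*((Real.sin (θ / 2) : ℂ))^2*(Complex.exp (Complex.I * (φ : ℂ)))*((starRingEnd ℂ) (Complex.exp (Complex.I * (φ : ℂ))))*epsilon + (8:ℂ)*((Real.cos (θ / 2) : ℂ))^2*((Real.sin (θ / 2) : ℂ))^2*(Complex.exp (Complex.I * (φ : ℂ)))*((starRingEnd ℂ) (Complex.exp (Complex.I * (φ : ℂ))))*epsilon^2 + (-100/9:ℂ)*((Real.cos (θ / 2) : ℂ))^2*((Real.sin (θ / 2) : ℂ))^2*(Complex.exp (Complex.I * (φ : ℂ)))*((starRingEnd ℂ) (Complex.exp (Complex.I * (φ : ℂ))))*epsilon^3 + (-80/27:ℂ)*((Real.cos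 (θ / 2) : ℂ))^2*((Real.sin (θ / 2) : ℂ))^2*(Complex.exp (Complex.I * (φ : ℂ)))*((starRingEnd ℂ) (Complex.exp (Complex.I * (φ : ℂ))))*epsilon^4 + (28/9:ℂ)*((Real.cos (θ / 2) : ℂ))^2*((Real.sin (θ / 2) : ℂ))^2*(Complex.exp (Complex.I * (φ : ℂ)))*((starRingEnd ℂ) (Complex.exp (Complex.I * (φ : ℂ))))*epsilon^5 + (28/27:ℂ)*((Real.cos (θ / 2) : ℂ))^2*((Real.sin (θ / 2) : ℂ))^2*(Complex.exp (Complex.I * (φ : ℂ)))*((starRingEnd ℂ) (Complex.exp (Complex.I * (φ : ℂ))))*epsilon^6 + (16/27:ℂ)*((Real.cos (θ / 2) : ℂ))^2*((Real.sin (θ / 2) : ℂ))^2*(Complex.exp (Complex.I * (φ : ℂ)))^2 + (-4/9:ℂ)*((Real.cos (θ / 2) : ℂ))^2*((Real.sin (θ / 2) : ℂ))^2*(Complex.exp (Complex.I * (φ : ℂ)))^2*epsilon^2 + (-20/27:ℂ)*((Real.cos (θ / 2) : ℂ))^2*((Real.sin (θ / 2) : ℂ))^2*(Complex.exp (Complex.I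 * (φ : ℂ)))^2*epsilon^3 + (4/9:ℂ)*((Real.cos (θ / 2) : ℂ))^2*((Real.sin (θ / 2) : ℂ))^2*(Complex.exp (Complex.I * (φ : ℂ)))^2*epsilon^5 + (4/27:ℂ)*((Real.cos (θ / 2) : ℂ))^2*((Real.sin (θ / 2) : ℂ))^2*(Complex.exp (Complex.I * (φ : ℂ)))^2*epsilon^6 + (16/27:ℂ)*((Real.cos (θ / 2) : ℂ))^3*((Real.sin (θ / 2) : ℂ))*((starRingEnd ℂ) (Complex.exp (Complex.I * (φ : ℂ)))) + (-80/27:ℂ)*((Real.cos (θ / 2) : ℂ))^3*((Real.sin (θ / 2) : ℂ))*((starRingEnd ℂ) (Complex.exp (Complex.I * (φ : ℂ))))*epsilon + (4/27:ℂ)*((Real.cos (θ / 2) : ℂ))^3*((Real.sin (θ / 2) : ℂ))*((starRingEnd ℂ) (Complex.exp (Complex.I * (φ : ℂ))))*epsilon^2 + (104/27:ℂ)*((Real.cos (θ / 2) : ℂ))^3*((Real.sin (θ / 2) : ℂ))*((starRingEnd ℂ) (Complex.exp (Complex.I * (φ : ℂ))))*epsilon^3 + (8/27:ℂ)*((Real.cos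 (θ / 2) : ℂ))^3*((Real.sin (θ / 2) : ℂ))*((starRingEnd ℂ) (Complex.exp (Complex.I * (φ : ℂ))))*epsilon^4 + (-40/27:ℂ)*((Real.cos (θ / 2) : ℂ))^3*((Real.sin (θ / 2) : ℂ))*((starRingEnd ℂ) (Complex.exp (Complex.I * (φ : ℂ))))*epsilon^5 + (-4/9:ℂ)*((Real.cos (θ / 2) : ℂ))^3*((Real.sin (θ / 2) : ℂ))*((starRingEnd ℂ) (Complex.exp (Complex.I * (φ : ℂ))))*epsilon^6 + (32/27:ℂ)*((Real.cos (θ / 2) : ℂ))^3*((Real.sin (θ / 2) : ℂ))*(Complex.exp (Complex.I * (φ : ℂ))) + (-64/27:ℂ)*((Real.cos (θ / 2) : ℂ))^3*((Real.sin (θ / 2) : ℂ))*(Complex.exp (Complex.I * (φ : ℂ)))*epsilon + (-40/27:ℂ)*((Real.cos (θ / 2) : ℂ))^3*((Real.sin (θ / 2) : ℂ))*(Complex.exp (Complex.I * (φ : ℂ)))*epsilon^2 + (88/27:ℂ)*((Real.cos (θ / 2) : ℂ))^3*((Real.sin (θ / 2) : ℂ))*(Complex.exp (Complex.I * (φ :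 ℂ)))*epsilon^3 + (28/27:ℂ)*((Real.cos (θ / 2) : ℂ))^3*((Real.sin (θ / 2) : ℂ))*(Complex.exp (Complex.I * (φ : ℂ)))*epsilon^4 + (-32/27:ℂ)*((Real.cos (θ / 2) : ℂ))^3*((Real.sin (θ / 2) : ℂ))*(Complex.exp (Complex.I * (φ : ℂ)))*epsilon^5 + (-4/9:ℂ)*((Real.cos (θ / 2) : ℂ))^3*((Real.sin (θ / 2) : ℂ))*(Complex.exp (Complex.I * (φ : ℂ)))*epsilon^6 + (-200/27:ℂ)*((Real.cos (θ / 2) : ℂ))^4 + (152/27:ℂ)*((Real.cos (θ / 2) : ℂ))^4*epsilon + (28/9:ℂ)*((Real.cos (θ / 2) : ℂ))^4*epsilon^2 + (-124/27:ℂ)*((Real.cos (θ / 2) : ℂ))^4*epsilon^3 + (-32/27:ℂ)*((Real.cos (θ / 2) : ℂ))^4*epsilon^4 + (4/3:ℂ)*((Real.cos (θ / 2) : ℂ))^4*epsilon^5 + (4/9:ℂ)*((Real.cos (θ / 2) : ℂ))^4*epsilon^6) * eps_rel + ((8:ℂ)*((Real.sin (θ / 2) : ℂ))^4 + (8:ℂ)*((Real.sin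 (θ / 2) : ℂ))^4*(Complex.exp (Complex.I * (φ : ℂ)))*((starRingEnd ℂ) (Complex.exp (Complex.I * (φ : ℂ)))) + (20:ℂ)*((Real.cos (θ / 2) : ℂ))^2*((Real.sin (θ / 2) : ℂ))^2) * hX + ((8:ℂ) + (8:ℂ)*((Real.sin (θ / 2) : ℂ))^2 + (12:ℂ)*((Real.cos (θ / 2) : ℂ))^2) * hC

/-- For the four-photon singlet state
`f = cos(θ/2)·l + sin(θ/2)e^{iφ}·r`, the second moment is
`‖f²‖² = 17/2 − (1/2)cos(2θ)`. -/
theorem second_moment_singlet (θ φ : ℝ)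
    (f : MvPolynomial (Fin 8) ℂ)
    (hf : f = (Real.cos (θ / 2) : ℂ) • singletL +
        ((Real.sin (θ / 2) : ℂ) * Complex.exp (Complex.I * (φ : ℂ))) • singletR) :
    fischerNormSq (f ^ 2) = 17 / 2 - (1 / 2) * Real.cos (2 * θ) :=
  second_moment_singlet' θ φ f hf
end
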